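/- arXiv:2306.13502 — 8 statements merged into one kernel-verified Lean document; each statement's English description precedes it below -/
import Mathlib

section
/- Let K be a field, A an invertible 2×2 matrix over K with entries a,b,c,d, and Q(x) = (ax+b)/(cx+d) the associated degree-1 rational function. If F ∈ K[x] is irreducible of degree ≥ 2, then the polynomial (cx+d)^{deg F} · F((ax+b)/(cx+d)) is again irreducible of degree deg F. -/
open Polynomial

/-- Composing with a degree-one polynomial on the left is cancelled by composing with its
inverse. -/
private lemma comp_cancel {K : Type*} [Field K] (p L M : Polynomial K)
    (h : L.comp M = X) : (p.comp L).comp M = p := by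
  rw [comp_assoc, h, comp_X]

private lemma linear_comp_linear {K : Type*} [Field K] {u v : K} (hu : u ≠ 0) :
    (C u * X + C v).comp (C u⁻¹ * X + C (-(v * u⁻¹))) = X := by
  have h1 : u * u⁻¹ = 1 := mul_inv_cancel₀ hu
  have h2 : u * -(v * u⁻¹) = -v := by field_simp
  simp only [add_comp, mul_comp, C_comp, X_comp, mul_add, ← mul_assoc, ← C_mul, h1, h2]
  rw [map_one, one_mul, map_neg]
  ring

private lemma linear_comp_linear' {K : Type*} [Field K] {u v : K} (hu : u ≠ 0) :
    (C u⁻¹ * X + C (-(v * u⁻¹))).comp (C u * X + C v) = X := by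
  have h1 : u⁻¹ * u = 1 := inv_mul_cancel₀ hu
  simp only [add_comp, mul_comp, C_comp, X_comp, mul_add, ← mul_assoc, ← C_mul, h1]
  rw [map_one, one_mul, add_assoc, ← C_add,
    show u⁻¹ * v + -(v * u⁻¹) = 0 by ring, map_zero, add_zero]

/-- Composition with a degree-one polynomial preserves irreducibility. -/
private lemma irreducible_comp_linear {K : Type*} [Field K] {u v : K} (hu : u ≠ 0)
    {p : Polynomial K} (hp : Irreducible p) :
    Irreducible (p.comp (C u * X + C v)) := by
  set L : Polynomial K := C u * X + C v with hL
  set M : Polynomial K := C u⁻¹ * X + C (-(v * u⁻¹)) with hM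
  have hLM : L.comp M = X := linear_comp_linear hu
  have hML : M.comp L = X := linear_comp_linear' hu
  constructor
  · intro h
    obtain ⟨k, hk, hCk⟩ := Polynomial.isUnit_iff.mp h
    have : p = C k := by
      conv_lhs => rw [← comp_cancel p L M hLM, ← hCk]
      simp
    exact hp.not_isUnit (this ▸ isUnit_C.mpr hk)
  · intro s t h
    have hps : p = s.comp M * t.comp M := by
      conv_lhs => rw [← comp_cancel p L M hLM, h, mul_comp]
    rcases hp.isUnit_or_isUnit hps with h1 | h1
    · left
      obtain ⟨k, hk, hCk⟩ := Polynomial.isUnit_iff.mp h1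
      have : s = C k := by
        conv_lhs => rw [← comp_cancel s M L hML, ← hCk]
        simp
      exact this ▸ isUnit_C.mpr hk
    · right
      obtain ⟨k, hk, hCk⟩ := Polynomial.isUnit_iff.mp h1
      have : t = C k := by
        conv_lhs => rw [← comp_cancel t M L hML, ← hCk]
        simp
      exact this ▸ isUnit_C.mpr hk

private lemma reflect_reflect {K : Type*} [Field K] (N : ℕ) (p : Polynomial K) :
    reflect N (reflect N p) = p := by
  ext i
  simp [coeff_reflect, revAt_invol]

/-- The reverse (reflect at `natDegree`) of an irreducible polynomial with nonzero constant
coefficient and degree at least two is irreducible. -/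
private lemma irreducible_reflect {K : Type*} [Field K] {p : Polynomial K}
    (hp : Irreducible p) (h0 : p.coeff 0 ≠ 0) (h2 : 2 ≤ p.natDegree) :
    Irreducible (reflect p.natDegree p) := by
  have hpne : p ≠ 0 := hp.ne_zero
  have htr : p.natTrailingDegree = 0 := natTrailingDegree_eq_zero.mpr (Or.inr h0)
  have hrev : reflect p.natDegree p = p.reverse := rfl
  have hdegrev : (reflect p.natDegree p).natDegree = p.natDegree := by
    rw [hrev, reverse_natDegree, htr, Nat.sub_zero]
  have hrevne : reflect p.natDegree p ≠ 0 := by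
    rw [hrev, Ne, reverse_eq_zero]; exact hpne
  constructor
  · intro h
    have := natDegree_eq_zero_of_isUnit h
    omega
  · intro s t h
    have hsne : s ≠ 0 := by rintro rfl; simp at h; exact hpne h
    have htne : t ≠ 0 := by rintro rfl; simp at h; exact hpne h
    have hsum : s.natDegree + t.natDegree = p.natDegree := by
      rw [← natDegree_mul hsne htne, ← h, hdegrev]
    have hps : p = reflect s.natDegree s * reflect t.natDegree t := by
      conv_lhs => rw [← reflect_reflect p.natDegree p, h]
      rw [← hsum, reflect_mul s t le_rfl le_rfl]
    -- constant coefficients of s and t are nonzero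
    have hc0 : (reflect p.natDegree p).coeff 0 ≠ 0 := by
      rw [hrev, coeff_zero_reverse]
      exact leadingCoeff_ne_zero.mpr hpne
    have hs0 : s.coeff 0 ≠ 0 := by
      intro hs0
      apply hc0
      rw [h, mul_coeff_zero, hs0, zero_mul]
    have ht0 : t.coeff 0 ≠ 0 := by
      intro ht0
      apply hc0
      rw [h, mul_coeff_zero, ht0, mul_zero]
    rcases hp.isUnit_or_isUnit hps with h1 | h1
    · left
      obtain ⟨k, hk, hCk⟩ := Polynomial.isUnit_iff.mp h1
      have hsk : s = C k * X ^ s.natDegree := by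
        conv_lhs => rw [← reflect_reflect s.natDegree s, ← hCk]
        rw [reflect_C]
      have : s.natDegree = 0 := by
        by_contra hne
        apply hs0
        rw [hsk]
        simp [coeff_C_mul, coeff_X_pow, Ne.symm hne]
      rw [hsk, this, pow_zero, mul_one]
      exact isUnit_C.mpr hk
    · right
      obtain ⟨k, hk, hCk⟩ := Polynomial.isUnit_iff.mp h1
      have htk : t = C k * X ^ t.natDegree := by
        conv_lhs => rw [← reflect_reflect t.natDegree t, ← hCk]
        rw [reflect_C]
      have : t.natDegree = 0 := by
        by_contra hne
        apply ht0
        rw [htk]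
        simp [coeff_C_mul, coeff_X_pow, Ne.symm hne]
      rw [htk, this, pow_zero, mul_one]
      exact isUnit_C.mpr hk

/-- Reflecting a power of a linear polynomial swaps its coefficients. -/
private lemma reflect_linear_pow {K : Type*} [Field K] (e r : K) :
    ∀ i : ℕ, reflect i ((C e * X + C r) ^ i) = (C r * X + C e) ^ i := by
  intro i
  induction i with
  | zero => simp [reflect_one]
  | succ i ih =>
      have h1 : reflect 1 (C e * X + C r) = C r * X + C e := by
        have : (C e * X + C r : Polynomial K) = C e * X ^ 1 + C r := by ring
        rw [this, reflect_add, reflect_C_mul_X_pow, reflect_C]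
        simp [revAt_le]
        ring
      have hd1 : (C e * X + C r : Polynomial K).natDegree ≤ 1 := natDegree_linear_le
      have hdi : ((C e * X + C r : Polynomial K) ^ i).natDegree ≤ i := by
        calc ((C e * X + C r : Polynomial K) ^ i).natDegree ≤ i * (C e * X + C r).natDegree :=
              natDegree_pow_le
          _ ≤ i * 1 := Nat.mul_le_mul_left i hd1
          _ = i := Nat.mul_one i
      rw [pow_succ, mul_comm, show i + 1 = 1 + i from Nat.add_comm i 1,
        reflect_mul _ _ hd1 hdi, h1, ih]
      ring

/-- An irreducible polynomial of degree at least 2 over a field has no root. -/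
private lemma no_root {K : Type*} [Field K] {F : Polynomial K}
    (hF : Irreducible F) (hdeg : 2 ≤ F.natDegree) (r : K) : F.eval r ≠ 0 := by
  intro h
  obtain ⟨q, hq⟩ : (X - C r) ∣ F := dvd_iff_isRoot.mpr h
  rcases hF.isUnit_or_isUnit hq with h1 | h1
  · exact not_isUnit_X_sub_C r h1
  · have hq0 : natDegree q = 0 := natDegree_eq_zero_of_isUnit h1
    have hqne : q ≠ 0 := by rintro rfl; simp at hq; exact hF.ne_zero hq
    have : F.natDegree = 1 := by
      rw [hq, natDegree_mul (X_sub_C_ne_zero r) hqne, natDegree_X_sub_C, hq0]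
    omega

/-- The degree-one rational transformation `F ↦ (cx+d)^{deg F} · F((ax+b)/(cx+d))`
of an irreducible polynomial of degree at least 2 is irreducible of the same degree. -/
theorem degree_one_transform_irreducible {K : Type*} [Field K]
    (a b c d : K) (hdet : a * d - b * c ≠ 0)
    (F : Polynomial K) (hF : Irreducible F) (hdeg : 2 ≤ F.natDegree) :
    Irreducible (∑ i ∈ Finset.range (F.natDegree + 1),
        C (F.coeff i) * (C a * X + C b) ^ i * (C c * X + C d) ^ (F.natDegree - i)) ∧
    (∑ i ∈ Finset.range (F.natDegree + 1),
        C (F.coeff i) * (C a * X + C b) ^ i *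
          (C c * X + C d) ^ (F.natDegree - i)).natDegree = F.natDegree := by
  set n := F.natDegree with hn
  by_cases hc : c = 0
  · -- affine case: c = 0
    subst hc
    have had : a * d ≠ 0 := by simpa using hdet
    have ha : a ≠ 0 := fun h => had (by simp [h])
    have hd : d ≠ 0 := fun h => had (by simp [h])
    set M : Polynomial K := C (a / d) * X + C (b / d) with hM
    have hdM : C d * M = C a * X + C b := by
      rw [hM, mul_add, ← mul_assoc, ← C_mul, ← C_mul,
        mul_div_cancel₀ a hd, mul_div_cancel₀ b hd]
    have hkey : (∑ i ∈ Finset.range (n + 1),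
        C (F.coeff i) * (C a * X + C b) ^ i * (C 0 * X + C d) ^ (n - i)) =
        C d ^ n * F.comp M := by
      rw [show F.comp M = eval₂ C M F from rfl,
        eval₂_eq_sum_range, Finset.mul_sum]
      refine Finset.sum_congr rfl fun i hi => ?_
      have hin : i ≤ n := Nat.lt_succ_iff.mp (Finset.mem_range.mp hi)
      rw [← hdM]
      have : (C 0 * X + C d : Polynomial K) = C d := by simp
      have hpw : (C d : Polynomial K) ^ i * C d ^ (n - i) = C d ^ n := by
        rw [← pow_add, Nat.add_sub_cancel' hin]
      rw [this, mul_pow, ← hpw]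
      ring
    rw [hkey]
    have hMirr : Irreducible (F.comp M) := irreducible_comp_linear (div_ne_zero ha hd) hF
    have hdn : IsUnit (C d ^ n : Polynomial K) := (isUnit_C.mpr hd.isUnit).pow n
    constructor
    · exact (Associated.irreducible ⟨hdn.unit, by rw [IsUnit.unit_spec]; ring⟩ hMirr)
    · rw [natDegree_mul (hdn.ne_zero) hMirr.ne_zero, natDegree_pow, natDegree_C,
        mul_zero, zero_add, natDegree_comp, hM, natDegree_linear (div_ne_zero ha hd),
        mul_one]
  · -- genuine Möbius case: c ≠ 0
    set r : K := a / c with hr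
    set e : K := (b * c - a * d) / c with he
    have hene : e ≠ 0 := by
      rw [he]
      apply div_ne_zero _ hc
      intro h
      exact hdet (by linear_combination -h)
    set L : Polynomial K := C e * X + C r with hL
    set u : Polynomial K := C c * X + C d with hu
    set H : Polynomial K := F.comp L with hH
    have hrc : r * c = a := div_mul_cancel₀ a hc
    have hrde : r * d + e = b := by
      rw [hr, he]
      field_simp
      try ring
    have hru : C r * u + C e = C a * X + C b := by
      rw [hu, mul_add, ← mul_assoc, ← C_mul, hrc, ← C_mul, add_assoc, ← C_add, hrde]
    have hHdeg : H.natDegree = n := by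
      rw [hH, natDegree_comp, hL, natDegree_linear hene, mul_one, hn]
    have hH0 : H.coeff 0 ≠ 0 := by
      rw [coeff_zero_eq_eval_zero, hH, eval_comp, hL]
      have : (C e * X + C r : Polynomial K).eval 0 = r := by simp
      rw [this]
      exact no_root hF hdeg r
    have hHirr : Irreducible H := irreducible_comp_linear hene hF
    have hH2 : 2 ≤ H.natDegree := hHdeg ▸ hdeg
    -- the key identity
    have hkey : (∑ i ∈ Finset.range (n + 1),
        C (F.coeff i) * (C a * X + C b) ^ i * (C c * X + C d) ^ (n - i)) =
        (reflect n H).comp u := by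
      have hHsum : H = ∑ i ∈ Finset.range (n + 1), C (F.coeff i) * L ^ i := by
        rw [hH, show F.comp L = eval₂ C L F from rfl, eval₂_eq_sum_range]
      have hreflsum : reflect n H =
          ∑ i ∈ Finset.range (n + 1), C (F.coeff i) * ((C r * X + C e) ^ i * X ^ (n - i)) := by
        rw [hHsum]
        ext k
        rw [coeff_reflect, finset_sum_coeff, finset_sum_coeff]
        refine Finset.sum_congr rfl fun i hi => ?_
        have hin : i ≤ n := Nat.lt_succ_iff.mp (Finset.mem_range.mp hi)
        have : reflect n (C (F.coeff i) * L ^ i) =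
            C (F.coeff i) * ((C r * X + C e) ^ i * X ^ (n - i)) := by
          rw [reflect_C_mul]
          congr 1
          have hdi : (L ^ i).natDegree ≤ i := by
            calc (L ^ i).natDegree ≤ i * L.natDegree := natDegree_pow_le
              _ ≤ i * 1 := Nat.mul_le_mul_left i (hL ▸ natDegree_linear_le)
              _ = i := Nat.mul_one i
          have h1 : (1 : Polynomial K).natDegree ≤ n - i := by simp
          rw [show n = i + (n - i) from (Nat.add_sub_cancel' hin).symm,
            show L ^ i = L ^ i * 1 from (mul_one _).symm,
            reflect_mul _ _ hdi h1, hL, reflect_linear_pow, reflect_one,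
            Nat.add_sub_cancel_left]
        rw [← this, coeff_reflect]
      rw [hreflsum, Polynomial.sum_comp]
      refine Finset.sum_congr rfl fun i hi => ?_
      simp only [mul_comp, pow_comp, add_comp, C_comp, X_comp]
      rw [hru, hu]
      ring
    rw [hkey]
    have hrefl := irreducible_reflect hHirr hH0 hH2
    rw [hHdeg] at hrefl
    have hredeg : (reflect n H).natDegree = n := by
      have htr : H.natTrailingDegree = 0 := natTrailingDegree_eq_zero.mpr (Or.inr hH0)
      have : reflect n H = H.reverse := by rw [reverse, hHdeg]
      rw [this, reverse_natDegree, htr, Nat.sub_zero, hHdeg]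
    constructor
    · exact irreducible_comp_linear hc hrefl
    · rw [natDegree_comp, hredeg, hu, natDegree_linear hc, mul_one]
end

section
/- Let K be a field, G a subgroup of PGL₂(K), f a G-invariant monic polynomial in K[x] with no roots in G∘∞, and r a monic irreducible factor of f. If rⁿ divides f and r^{n+1} does not divide f, then for every [A] ∈ G, ([A]∗r)ⁿ divides f and ([A]∗r)^{n+1} does not divide f; i.e., all polynomials in the G-orbit of r divide f with the same multiplicity. -/
open Polynomial

attribute [local instance] Classical.propDecidable

noncomputable section

variable (K : Type*) [Field K]

/-- The projective general linear group `PGL₂(K)`. -/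
abbrev PGL2 := Matrix.GeneralLinearGroup (Fin 2) K ⧸
  Subgroup.center (Matrix.GeneralLinearGroup (Fin 2) K)

variable {K}

/-- entry of a matrix in `GL₂(K)` -/
def ent (A : Matrix.GeneralLinearGroup (Fin 2) K) (i j : Fin 2) : K :=
  (A : Matrix (Fin 2) (Fin 2) K) i j

/-- `(cx+d)^n · p((ax+b)/(cx+d))`, the raw (un-normalized) transform. -/
def rawAct (A : Matrix.GeneralLinearGroup (Fin 2) K) (n : ℕ) (p : Polynomial K) :
    Polynomial K :=
  ∑ i ∈ Finset.range (n + 1),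
    C (p.coeff i) * (C (ent A 0 0) * X + C (ent A 0 1)) ^ i *
      (C (ent A 1 0) * X + C (ent A 1 1)) ^ (n - i)

/-- The normalized polynomial transformation `[A]∗f`. -/
def polyAct (A : Matrix.GeneralLinearGroup (Fin 2) K) (f : Polynomial K) : Polynomial K :=
  rawAct A f.natDegree f * C (rawAct A f.natDegree f).leadingCoeff⁻¹

/-- Möbius action of `GL₂(K)` on `K̄ ∪ {∞}`; `none` plays the role of `∞`. -/
def mob (A : Matrix.GeneralLinearGroup (Fin 2) K) :
    Option (AlgebraicClosure K) → Option (AlgebraicClosure K)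
  | none =>
      if algebraMap K (AlgebraicClosure K) (ent A 1 0) = 0 then none
      else some (algebraMap K (AlgebraicClosure K) (ent A 0 0) /
        algebraMap K (AlgebraicClosure K) (ent A 1 0))
  | some x =>
      if algebraMap K (AlgebraicClosure K) (ent A 1 0) * x +
          algebraMap K (AlgebraicClosure K) (ent A 1 1) = 0 then none
      else some ((algebraMap K (AlgebraicClosure K) (ent A 0 0) * x +
          algebraMap K (AlgebraicClosure K) (ent A 0 1)) /
        (algebraMap K (AlgebraicClosure K) (ent A 1 0) * x +
          algebraMap K (AlgebraicClosure K) (ent A 1 1)))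

/-- Möbius orbit of a point under a subgroup `G ≤ PGL₂(K)`. -/
def mobOrbit (G : Subgroup (PGL2 K)) (v : Option (AlgebraicClosure K)) :
    Set (Option (AlgebraicClosure K)) :=
  {w | ∃ A : Matrix.GeneralLinearGroup (Fin 2) K,
    (QuotientGroup.mk A : PGL2 K) ∈ G ∧ mob A v = w}

/-- Orbit of a polynomial under the normalized action of `G ≤ PGL₂(K)`. -/
def polyOrbit (G : Subgroup (PGL2 K)) (r : Polynomial K) : Set (Polynomial K) :=
  {t | ∃ A : Matrix.GeneralLinearGroup (Fin 2) K,
    (QuotientGroup.mk A : PGL2 K) ∈ G ∧ polyAct A r = t}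

/-- `f` has no roots in the Möbius `G`-orbit of `∞`. -/
def NoRootsInOrbitInfty (G : Subgroup (PGL2 K)) (f : Polynomial K) : Prop :=
  ∀ x : AlgebraicClosure K, some x ∈ mobOrbit G none → Polynomial.aeval x f ≠ 0

/-- `f` is `G`-invariant for the normalized polynomial action. -/
def GInvariant (G : Subgroup (PGL2 K)) (f : Polynomial K) : Prop :=
  ∀ A : Matrix.GeneralLinearGroup (Fin 2) K,
    (QuotientGroup.mk A : PGL2 K) ∈ G → polyAct A f = f

/-- `Q_G = g/h` is a quotient map for the finite subgroup `G ≤ PGL₂(K)`: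
a `G`-invariant reduced rational function with `g` monic and
`deg h < deg g = |G|` (equivalently, a normalized generator of `K(x)^G`). -/
structure IsQuotientMap (G : Subgroup (PGL2 K)) (g h : Polynomial K) : Prop where
  monic_g : g.Monic
  h_ne : h ≠ 0
  coprime : IsCoprime g h
  deg_lt : h.natDegree < g.natDegree
  deg_eq : g.natDegree = Nat.card G
  invariant : ∀ A : Matrix.GeneralLinearGroup (Fin 2) K,
    (QuotientGroup.mk A : PGL2 K) ∈ G →
      rawAct A g.natDegree g * h = rawAct A g.natDegree h * g

/-- The `Q`-transform `F^{g/h}(x) = h(x)^{deg F} F(g(x)/h(x))`. -/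
def Qtransform (g h F : Polynomial K) : Polynomial K :=
  ∑ i ∈ Finset.range (F.natDegree + 1), C (F.coeff i) * g ^ i * h ^ (F.natDegree - i)

/-- set of roots of `f` in the algebraic closure -/
def rootSetAC (f : Polynomial K) : Set (AlgebraicClosure K) :=
  {x | Polynomial.aeval x f = 0}

end


noncomputable section AuxOSM
variable {K : Type*} [Field K]

namespace OSM
variable (A B : Matrix.GeneralLinearGroup (Fin 2) K)

def linM : Polynomial K := C (ent A 0 0) * X + C (ent A 0 1)
def linL : Polynomial K := C (ent A 1 0) * X + C (ent A 1 1)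

lemma rawAct_def (n : ℕ) (p : Polynomial K) :
    rawAct A n p = ∑ i ∈ Finset.range (n + 1), C (p.coeff i) * linM A ^ i * linL A ^ (n - i) :=
  rfl

lemma lin_ne_zero {u v : K} (h : ¬ (u = 0 ∧ v = 0)) : C u * X + C v ≠ (0 : Polynomial K) := by
  intro h0
  apply h
  constructor
  · have := congrArg (fun p => Polynomial.coeff p 1) h0
    simpa using this
  · have := congrArg (fun p => Polynomial.coeff p 0) h0
    simpa using this

lemma det_isUnit : IsUnit ((A : Matrix (Fin 2) (Fin 2) K).det) :=
  (Matrix.isUnit_iff_isUnit_det _).mp A.isUnit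

lemma linL_ne_zero : linL A ≠ 0 := by
  apply lin_ne_zero
  rintro ⟨hc, hd⟩
  have h := (det_isUnit A).ne_zero
  rw [Matrix.det_fin_two] at h
  exact h (by simp [show (A : Matrix (Fin 2) (Fin 2) K) 1 0 = 0 from hc,
    show (A : Matrix (Fin 2) (Fin 2) K) 1 1 = 0 from hd])

abbrev ι : Polynomial K →+* RatFunc K := algebraMap (Polynomial K) (RatFunc K)

lemma ι_inj : Function.Injective (ι (K := K)) := RatFunc.algebraMap_injective K

lemma ιL_ne_zero : ι (linL A) ≠ 0 := by
  intro h
  exact linL_ne_zero A (ι_inj (by simpa using h))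

def mu : RatFunc K := ι (linM A) / ι (linL A)

lemma map_rawAct {p : Polynomial K} {n : ℕ} (hp : p.natDegree ≤ n) :
    ι (rawAct A n p) = ι (linL A) ^ n * Polynomial.aeval (mu A) p := by
  rw [rawAct_def, map_sum, aeval_eq_sum_range' (Nat.lt_succ_of_le hp), Finset.mul_sum]
  refine Finset.sum_congr rfl fun i hi => ?_
  have hi' : i ≤ n := Nat.lt_succ_iff.mp (Finset.mem_range.mp hi)
  have hL := ιL_ne_zero A
  rw [Algebra.smul_def, map_mul, map_mul, map_pow, map_pow, mu, div_pow,
    RatFunc.algebraMap_C, ← RatFunc.algebraMap_eq_C]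
  rw [show n = (n - i) + i from (Nat.sub_add_cancel hi').symm, pow_add]
  field_simp
  ring_nf
  rw [Nat.add_sub_cancel_left]

lemma rawAct_natDegree_le (n : ℕ) (p : Polynomial K) : (rawAct A n p).natDegree ≤ n := by
  rw [rawAct_def]
  refine (Polynomial.natDegree_sum_le _ _).trans ?_
  rw [Finset.fold_max_le]
  refine ⟨Nat.zero_le _, fun i hi => ?_⟩
  have hi' : i ≤ n := Nat.lt_succ_iff.mp (Finset.mem_range.mp hi)
  calc (C (p.coeff i) * linM A ^ i * linL A ^ (n - i)).natDegree
      ≤ (C (p.coeff i) * linM A ^ i).natDegree + (linL A ^ (n-i)).natDegree :=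
        natDegree_mul_le
    _ ≤ ((C (p.coeff i)).natDegree + (linM A ^ i).natDegree) + (linL A ^ (n-i)).natDegree := by
        exact Nat.add_le_add_right natDegree_mul_le _
    _ ≤ (0 + i * 1) + (n - i) * 1 := by
        refine Nat.add_le_add (Nat.add_le_add (by simp) ?_) ?_
        · exact natDegree_pow_le.trans (by
            exact Nat.mul_le_mul_left i (natDegree_linear_le))
        · exact natDegree_pow_le.trans (by
            exact Nat.mul_le_mul_left _ (natDegree_linear_le))
    _ ≤ n := by omega

lemma rawAct_mul (p q : Polynomial K) :
    rawAct A (p.natDegree + q.natDegree) (p * q) =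
      rawAct A p.natDegree p * rawAct A q.natDegree q := by
  apply ι_inj
  rw [map_rawAct A natDegree_mul_le, map_mul, map_mul, map_rawAct A le_rfl,
    map_rawAct A le_rfl, pow_add]
  ring

lemma lin_comb (u v : K) :
    ι (linL B) * (algebraMap K (RatFunc K) u * mu B + algebraMap K (RatFunc K) v) =
      ι (C u * linM B + C v * linL B) := by
  have hL := ιL_ne_zero B
  rw [mu]
  rw [map_add, map_mul, map_mul, RatFunc.algebraMap_C, RatFunc.algebraMap_C,
    ← RatFunc.algebraMap_eq_C]
  field_simp

lemma linM_mul : (C (ent A 0 0) * linM B + C (ent A 0 1) * linL B : Polynomial K)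
    = linM (A * B) := by
  simp only [linM, linL, ent, Units.val_mul, Matrix.mul_apply, Fin.sum_univ_two]
  simp only [map_add, map_mul]
  ring

lemma linL_mul : (C (ent A 1 0) * linM B + C (ent A 1 1) * linL B : Polynomial K)
    = linL (A * B) := by
  simp only [linM, linL, ent, Units.val_mul, Matrix.mul_apply, Fin.sum_univ_two]
  simp only [map_add, map_mul]
  ring

lemma rawAct_comp {p : Polynomial K} {n : ℕ} (hp : p.natDegree ≤ n) :
    rawAct B n (rawAct A n p) = rawAct (A * B) n p := by
  apply ι_inj
  rw [map_rawAct B (rawAct_natDegree_le A n p), rawAct_def A n p, map_sum, Finset.mul_sum,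
    rawAct_def (A*B), map_sum]
  refine Finset.sum_congr rfl fun i hi => ?_
  have hi' : i ≤ n := Nat.lt_succ_iff.mp (Finset.mem_range.mp hi)
  simp only [map_mul, map_pow]
  have hM : (Polynomial.aeval (mu B)) (linM A)
      = algebraMap K (RatFunc K) (ent A 0 0) * mu B + algebraMap K (RatFunc K) (ent A 0 1) := by
    simp [linM]
  have hL : (Polynomial.aeval (mu B)) (linL A)
      = algebraMap K (RatFunc K) (ent A 1 0) * mu B + algebraMap K (RatFunc K) (ent A 1 1) := by
    simp [linL]
  have hCc : (Polynomial.aeval (mu B)) (C (p.coeff i)) = ι (C (p.coeff i)) := by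
    simp [RatFunc.algebraMap_C]
  rw [hM, hL, hCc, ← linM_mul, ← linL_mul, ← lin_comb, ← lin_comb,
    show (ι (linL B) : RatFunc K)^n = ι (linL B)^i * ι (linL B)^(n-i) by
      rw [← pow_add, Nat.add_sub_cancel' hi'], mul_pow, mul_pow]
  ring

lemma rawAct_one {p : Polynomial K} {n : ℕ} (hp : p.natDegree ≤ n) :
    rawAct (1 : Matrix.GeneralLinearGroup (Fin 2) K) n p = p := by
  have h00 : ent (1 : Matrix.GeneralLinearGroup (Fin 2) K) 0 0 = 1 := by
    simp [ent, Matrix.one_apply]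
  have h01 : ent (1 : Matrix.GeneralLinearGroup (Fin 2) K) 0 1 = 0 := by
    simp [ent, Matrix.one_apply]
  have h10 : ent (1 : Matrix.GeneralLinearGroup (Fin 2) K) 1 0 = 0 := by
    simp [ent, Matrix.one_apply]
  have h11 : ent (1 : Matrix.GeneralLinearGroup (Fin 2) K) 1 1 = 1 := by
    simp [ent, Matrix.one_apply]
  rw [rawAct_def]
  simp only [linM, linL, h00, h01, h10, h11, map_one, map_zero, one_mul, add_zero,
    zero_mul, zero_add, one_pow, mul_one]
  conv_rhs => rw [p.as_sum_range' (n+1) (Nat.lt_succ_of_le hp)]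
  exact Finset.sum_congr rfl fun i _ => by rw [C_mul_X_pow_eq_monomial]

lemma rawAct_zero (n : ℕ) : rawAct A n (0 : Polynomial K) = 0 := by
  simp [rawAct_def]

lemma rawAct_ne_zero {p : Polynomial K} {n : ℕ} (hp : p.natDegree ≤ n) (h0 : p ≠ 0) :
    rawAct A n p ≠ 0 := by
  intro h
  apply h0
  have := rawAct_comp A A⁻¹ hp
  rw [h, rawAct_zero, mul_inv_cancel, rawAct_one hp] at this
  exact this.symm

lemma rawAct_split {q : Polynomial K} {m' n : ℕ} (hq : q.natDegree ≤ m') (h : m' ≤ n) :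
    rawAct A n q = rawAct A m' q * (linL A) ^ (n - m') := by
  apply ι_inj
  rw [map_rawAct A (hq.trans h), map_mul, map_rawAct A hq, map_pow,
    show (ι (linL A) : RatFunc K)^n = ι (linL A)^m' * ι (linL A)^(n-m') by
      rw [← pow_add, Nat.add_sub_cancel' h]]
  ring

lemma rawAct_C_mul (n : ℕ) (k : K) (q : Polynomial K) :
    rawAct A n (C k * q) = C k * rawAct A n q := by
  rw [rawAct_def, rawAct_def, Finset.mul_sum]
  refine Finset.sum_congr rfl fun i _ => ?_
  rw [coeff_C_mul, map_mul]
  ring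


lemma polyAct_ne_zero {p : Polynomial K} (hp : p ≠ 0) : polyAct A p ≠ 0 := by
  have ht := rawAct_ne_zero A le_rfl hp
  have : (rawAct A p.natDegree p).leadingCoeff ≠ 0 := leadingCoeff_ne_zero.mpr ht
  exact mul_ne_zero ht (by simpa using inv_ne_zero this)

lemma polyAct_one : polyAct A (1 : Polynomial K) = 1 := by
  have h1 : rawAct A (1 : Polynomial K).natDegree 1 = 1 := by
    simp [rawAct_def]
  rw [polyAct, h1]
  simp

lemma polyAct_mul {p q : Polynomial K} (hp : p ≠ 0) (hq : q ≠ 0) :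
    polyAct A (p * q) = polyAct A p * polyAct A q := by
  rw [polyAct, polyAct, polyAct, natDegree_mul hp hq, rawAct_mul, leadingCoeff_mul,
    mul_inv, C_mul]
  ring

lemma polyAct_pow {p : Polynomial K} (hp : p ≠ 0) (k : ℕ) :
    polyAct A (p ^ k) = polyAct A p ^ k := by
  induction k with
  | zero => simpa using polyAct_one A
  | succ k ih => rw [pow_succ, polyAct_mul A (pow_ne_zero k hp) hp, ih, pow_succ]

lemma rawAct_inv_comp {p : Polynomial K} {n : ℕ} (hp : p.natDegree ≤ n) :
    rawAct A⁻¹ n (rawAct A n p) = p := by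
  rw [rawAct_comp A A⁻¹ hp, mul_inv_cancel, rawAct_one hp]

lemma polyAct_inv {r : Polynomial K} (hr : r.Monic)
    (hdeg : (rawAct A r.natDegree r).natDegree = r.natDegree) :
    polyAct A⁻¹ (polyAct A r) = r := by
  have hr0 : r ≠ 0 := hr.ne_zero
  set t := rawAct A r.natDegree r with ht
  have ht0 : t ≠ 0 := rawAct_ne_zero A le_rfl hr0
  set k := t.leadingCoeff⁻¹ with hk
  have hk0 : k ≠ 0 := inv_ne_zero (leadingCoeff_ne_zero.mpr ht0)
  have hdeg2 : (t * C k).natDegree = r.natDegree := by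
    rw [natDegree_mul ht0 (by simpa using hk0), natDegree_C, add_zero, hdeg]
  rw [polyAct, polyAct, hdeg2, ← ht, mul_comm t (C k), rawAct_C_mul, rawAct_inv_comp A le_rfl]
  have hlead : (C k * r).leadingCoeff = k := by
    rw [leadingCoeff_mul, leadingCoeff_C, hr.leadingCoeff, mul_one]
  rw [hlead, mul_comm (C k) r, mul_assoc, ← C_mul, mul_inv_cancel₀ hk0, C_1, mul_one]

end OSM

section Main
open OSM
variable {K : Type*} [Field K]

lemma OSM.deg_preserve {G : Subgroup (PGL2 K)} {f : Polynomial K}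
    (hfR : NoRootsInOrbitInfty G f) {r : Polynomial K} (hrf : r ∣ f)
    {A : Matrix.GeneralLinearGroup (Fin 2) K}
    (hA : (QuotientGroup.mk A : PGL2 K) ∈ G) :
    (rawAct A r.natDegree r).natDegree = r.natDegree := by
  set m := r.natDegree with hm
  set t := rawAct A m r with ht
  have hle : t.natDegree ≤ m := rawAct_natDegree_le A m r
  refine le_antisymm hle ?_
  by_contra hne
  have hlt : t.natDegree < m := lt_of_not_ge hne
  have h1 : rawAct A⁻¹ m t = r := rawAct_inv_comp A le_rfl
  have h2 : rawAct A⁻¹ m t = rawAct A⁻¹ t.natDegree t * linL A⁻¹ ^ (m - t.natDegree) :=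
    rawAct_split A⁻¹ le_rfl hle
  have hrl : r = rawAct A⁻¹ t.natDegree t * linL A⁻¹ ^ (m - t.natDegree) := by
    rw [← h1, h2]
  have hLr : linL A⁻¹ ∣ r := by
    refine dvd_trans (dvd_pow_self _ (Nat.sub_ne_zero_of_lt hlt)) ⟨rawAct A⁻¹ t.natDegree t, ?_⟩
    rw [hrl]; ring
  have hLf : linL A⁻¹ ∣ f := hLr.trans hrf
  by_cases hc : ent A⁻¹ 1 0 = 0
  · -- linL A⁻¹ is a constant; degree contradiction
    have hCL : linL A⁻¹ = Polynomial.C (ent A⁻¹ 1 1) := by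
      simp [linL, hc]
    have : m ≤ t.natDegree := by
      calc m = r.natDegree := rfl
        _ ≤ (rawAct A⁻¹ t.natDegree t).natDegree + (linL A⁻¹ ^ (m - t.natDegree)).natDegree := by
            rw [hrl]; exact Polynomial.natDegree_mul_le
        _ ≤ t.natDegree + 0 := by
            refine Nat.add_le_add (rawAct_natDegree_le _ _ _) ?_
            rw [hCL, ← Polynomial.C_pow, Polynomial.natDegree_C]
        _ = t.natDegree := by omega
    omega
  · -- linL A⁻¹ has a root which is in the orbit of infinity
    set D := ((A : Matrix (Fin 2) (Fin 2) K)).det with hD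
    have hDu : IsUnit D := det_isUnit A
    have hinv : ((A⁻¹ : Matrix.GeneralLinearGroup (Fin 2) K) : Matrix (Fin 2) (Fin 2) K)
        = Ring.inverse D • (A : Matrix (Fin 2) (Fin 2) K).adjugate := by
      rw [Matrix.coe_units_inv, Matrix.inv_def]
    have e1 : ent A⁻¹ 1 0 = D⁻¹ * (-(ent A 1 0)) := by
      simp [ent, hinv, Matrix.adjugate_fin_two, Ring.inverse_eq_inv']
    have e2 : ent A⁻¹ 1 1 = D⁻¹ * ent A 0 0 := by
      simp [ent, hinv, Matrix.adjugate_fin_two, Ring.inverse_eq_inv']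
    have hD0 : D ≠ 0 := hDu.ne_zero
    have hc0 : ent A 1 0 ≠ 0 := by
      intro h; apply hc; rw [e1, h]; ring
    set x₀ := ent A 0 0 / ent A 1 0 with hx₀
    have hroot : (linL A⁻¹).eval x₀ = 0 := by
      simp only [linL, Polynomial.eval_add, Polynomial.eval_mul, Polynomial.eval_C,
        Polynomial.eval_X, e1, e2, hx₀]
      field_simp
      ring
    have hfval : f.eval x₀ = 0 :=
      Polynomial.eval_eq_zero_of_dvd_of_eval_eq_zero hLf hroot
    have horb : some (algebraMap K (AlgebraicClosure K) x₀) ∈ mobOrbit G none := by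
      refine ⟨A, hA, ?_⟩
      have hac : algebraMap K (AlgebraicClosure K) (ent A 1 0) ≠ 0 :=
        (_root_.map_ne_zero _).mpr hc0
      show mob A none = _
      rw [mob, if_neg hac, hx₀, map_div₀]
    exact hfR _ horb (by
      rw [Polynomial.aeval_algebraMap_apply, Polynomial.coe_aeval_eq_eval, hfval, map_zero])
end Main

end AuxOSM

theorem orbit_same_multiplicity {K : Type*} [Field K] (G : Subgroup (PGL2 K))
    (f r : Polynomial K) (hf : f.Monic) (hfR : NoRootsInOrbitInfty G f)
    (hfinv : GInvariant G f) (hr : r.Monic) (hrirr : Irreducible r) (hrf : r ∣ f)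
    (n : ℕ) (hdvd : r ^ n ∣ f) (hndvd : ¬ r ^ (n + 1) ∣ f) :
    ∀ A : Matrix.GeneralLinearGroup (Fin 2) K, (QuotientGroup.mk A : PGL2 K) ∈ G →
      (polyAct A r) ^ n ∣ f ∧ ¬ (polyAct A r) ^ (n + 1) ∣ f := by
  intro A hA
  have hf0 : f ≠ 0 := hf.ne_zero
  have hr0 : r ≠ 0 := hr.ne_zero
  have hAinv : (QuotientGroup.mk A⁻¹ : PGL2 K) ∈ G := by
    rw [QuotientGroup.mk_inv]
    exact inv_mem hA
  constructor
  · obtain ⟨s, hs⟩ := hdvd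
    have hs0 : s ≠ 0 := by rintro rfl; rw [mul_zero] at hs; exact hf0 hs
    refine ⟨polyAct A s, ?_⟩
    calc f = polyAct A f := (hfinv A hA).symm
      _ = polyAct A (r ^ n * s) := by rw [← hs]
      _ = polyAct A (r ^ n) * polyAct A s := OSM.polyAct_mul A (pow_ne_zero n hr0) hs0
      _ = polyAct A r ^ n * polyAct A s := by rw [OSM.polyAct_pow A hr0]
  · rintro ⟨t, htf⟩
    have hdeg := OSM.deg_preserve hfR hrf hA
    have hrA0 : polyAct A r ≠ 0 := OSM.polyAct_ne_zero A hr0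
    have ht0 : t ≠ 0 := by rintro rfl; rw [mul_zero] at htf; exact hf0 htf
    have hback : polyAct A⁻¹ (polyAct A r) = r := OSM.polyAct_inv A hr hdeg
    apply hndvd
    refine ⟨polyAct A⁻¹ t, ?_⟩
    calc f = polyAct A⁻¹ f := (hfinv A⁻¹ hAinv).symm
      _ = polyAct A⁻¹ (polyAct A r ^ (n + 1) * t) := by rw [← htf]
      _ = polyAct A⁻¹ (polyAct A r ^ (n + 1)) * polyAct A⁻¹ t :=
          OSM.polyAct_mul A⁻¹ (pow_ne_zero _ hrA0) ht0
      _ = polyAct A⁻¹ (polyAct A r) ^ (n + 1) * polyAct A⁻¹ t := by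
          rw [OSM.polyAct_pow A⁻¹ hrA0]
      _ = r ^ (n + 1) * polyAct A⁻¹ t := by rw [hback]
end

section
/- Let K be a field, G a subgroup of PGL₂(K), and f ∈ K[x] a monic polynomial with no roots in G∘∞. If f is G-invariant, then for every [A] ∈ G the set of roots R_f of f in the algebraic closure satisfies [A]∘R_f = R_f. Conversely, if f is irreducible and [A]∘R_f = R_f for all [A] ∈ G, then f is G-invariant. -/
open Polynomial

attribute [local instance] Classical.propDecidable

section Helpers

variable {K : Type*} [Field K]

local notation "φ" => algebraMap K (AlgebraicClosure K)

lemma mulEnt {A B : Matrix.GeneralLinearGroup (Fin 2) K} (h : A * B = 1) (i j : Fin 2) :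
    ent A i 0 * ent B 0 j + ent A i 1 * ent B 1 j = if i = j then 1 else 0 := by
  have h1 : ((A : Matrix (Fin 2) (Fin 2) K) * (B : Matrix (Fin 2) (Fin 2) K)) = 1 := by
    rw [← Units.val_mul, h, Units.val_one]
  have h2 := Matrix.ext_iff.mpr h1 i j
  simpa [Matrix.mul_apply, Fin.sum_univ_two, Matrix.one_apply, ent] using h2

lemma denom_ne_zero {G : Subgroup (PGL2 K)} {f : Polynomial K}
    (hfR : NoRootsInOrbitInfty G f)
    (A : Matrix.GeneralLinearGroup (Fin 2) K) (hA : (QuotientGroup.mk A : PGL2 K) ∈ G)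
    {x : AlgebraicClosure K} (hx : Polynomial.aeval x f = 0) :
    φ (ent A 1 0) * x + φ (ent A 1 1) ≠ 0 := by
  intro h
  have hinj : Function.Injective φ := (algebraMap K (AlgebraicClosure K)).injective
  have eAB := mulEnt (mul_inv_cancel A)
  have eBA := mulEnt (inv_mul_cancel A)
  -- c ≠ 0
  have hc : ent A 1 0 ≠ 0 := by
    intro hc0
    have hd0 : ent A 1 1 = 0 := by
      apply hinj; rw [map_zero]
      have : φ (ent A 1 0) = 0 := by rw [hc0, map_zero]
      rw [this, zero_mul, zero_add] at h; exact h
    have := eAB 1 1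
    rw [hc0, hd0] at this
    simp at this
  have hc' : ent A⁻¹ 1 0 ≠ 0 := by
    intro hc'0
    have h10 := eBA 1 0
    rw [hc'0] at h10
    simp at h10
    have hd' : ent A⁻¹ 1 1 = 0 := by
      rcases h10 with h10 | h10
      · exact h10
      · exact absurd h10 hc
    have h11 := eBA 1 1
    rw [hc'0, hd'] at h11
    simp at h11
  exact hfR x ⟨A⁻¹, by rw [QuotientGroup.mk_inv]; exact inv_mem hA, by
    have hφc' : φ (ent A⁻¹ 1 0) ≠ 0 := fun h0 => hc' (hinj (by rwa [map_zero]))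
    rw [mob, if_neg hφc']
    congr 1
    have e10 := eAB 1 0
    simp at e10
    have e10' : φ (ent A 1 0) * φ (ent A⁻¹ 0 0) + φ (ent A 1 1) * φ (ent A⁻¹ 1 0) = 0 := by
      rw [← map_mul, ← map_mul, ← map_add, e10, map_zero]
    have hφc : φ (ent A 1 0) ≠ 0 := fun h0 => hc (hinj (by rwa [map_zero]))
    rw [div_eq_iff hφc']
    apply mul_left_cancel₀ hφc
    linear_combination e10' - φ (ent A⁻¹ 1 0) * h⟩ hx

lemma natDegree_linpow (a b : K) (i : ℕ) : ((C a * X + C b) ^ i).natDegree ≤ i := by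
  calc ((C a * X + C b) ^ i).natDegree ≤ i * (C a * X + C b).natDegree := natDegree_pow_le
    _ ≤ i * 1 := Nat.mul_le_mul le_rfl natDegree_linear_le
    _ = i := Nat.mul_one i

lemma coeff_linpow (a b : K) (i : ℕ) : ((C a * X + C b) ^ i).coeff i = a ^ i := by
  induction i with
  | zero => simp
  | succ i ih =>
    rw [pow_succ, coeff_mul_add_eq_of_natDegree_le (natDegree_linpow a b i) natDegree_linear_le, ih]
    simp [coeff_add, coeff_C, pow_succ]

lemma coeff_prod_top (a b c d : K) {i n : ℕ} (h : i ≤ n) :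
    ((C a * X + C b) ^ i * (C c * X + C d) ^ (n - i)).coeff n = a ^ i * c ^ (n - i) := by
  have h2 := coeff_mul_add_eq_of_natDegree_le (natDegree_linpow a b i) (natDegree_linpow c d (n - i))
  rw [Nat.add_sub_cancel' h] at h2
  rw [h2, coeff_linpow, coeff_linpow]

lemma rawAct_coeff (A : Matrix.GeneralLinearGroup (Fin 2) K) (n : ℕ) (p : Polynomial K) :
    (rawAct A n p).coeff n =
      ∑ i ∈ Finset.range (n + 1), p.coeff i * (ent A 0 0) ^ i * (ent A 1 0) ^ (n - i) := by
  rw [rawAct, finset_sum_coeff]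
  refine Finset.sum_congr rfl fun i hi => ?_
  rw [mul_assoc, coeff_C_mul, coeff_prod_top _ _ _ _ (Nat.lt_succ_iff.mp (Finset.mem_range.mp hi)),
    mul_assoc]

lemma rawAct_natDegree_le (A : Matrix.GeneralLinearGroup (Fin 2) K) (n : ℕ) (p : Polynomial K) :
    (rawAct A n p).natDegree ≤ n := by
  refine natDegree_sum_le_of_forall_le _ _ fun i hi => ?_
  have hi' : i ≤ n := Nat.lt_succ_iff.mp (Finset.mem_range.mp hi)
  calc (C (p.coeff i) * (C (ent A 0 0) * X + C (ent A 0 1)) ^ i *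
        (C (ent A 1 0) * X + C (ent A 1 1)) ^ (n - i)).natDegree
      ≤ (C (p.coeff i) * (C (ent A 0 0) * X + C (ent A 0 1)) ^ i).natDegree +
        ((C (ent A 1 0) * X + C (ent A 1 1)) ^ (n - i)).natDegree := natDegree_mul_le
    _ ≤ (0 + i) + (n - i) :=
        add_le_add (natDegree_mul_le.trans
          (add_le_add (le_of_eq (natDegree_C _)) (natDegree_linpow _ _ _))) (natDegree_linpow _ _ _)
    _ = n := by omega

lemma aeval_rawAct (A : Matrix.GeneralLinearGroup (Fin 2) K) (n : ℕ) (p : Polynomial K)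
    (x : AlgebraicClosure K) :
    Polynomial.aeval x (rawAct A n p) =
      ∑ i ∈ Finset.range (n + 1), φ (p.coeff i) *
        (φ (ent A 0 0) * x + φ (ent A 0 1)) ^ i *
        (φ (ent A 1 0) * x + φ (ent A 1 1)) ^ (n - i) := by
  simp [rawAct, map_sum, map_mul, map_pow, map_add, aeval_C, aeval_X]

lemma sum_eval {p : Polynomial K} {n : ℕ} (hn : p.natDegree ≤ n) (u : AlgebraicClosure K)
    {v : AlgebraicClosure K} (hv : v ≠ 0) :
    ∑ i ∈ Finset.range (n + 1), φ (p.coeff i) * u ^ i * v ^ (n - i) =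
      v ^ n * Polynomial.aeval (u / v) p := by
  rw [Polynomial.aeval_eq_sum_range' (Nat.lt_succ_of_le hn), Finset.mul_sum]
  refine Finset.sum_congr rfl fun i hi => ?_
  have hi' : i ≤ n := Nat.lt_succ_iff.mp (Finset.mem_range.mp hi)
  have hvpow : v ^ n = v ^ (n - i) * v ^ i := by rw [← pow_add, Nat.sub_add_cancel hi']
  rw [Algebra.smul_def, div_pow, hvpow]
  have hvi : (v : AlgebraicClosure K) ^ i ≠ 0 := pow_ne_zero _ hv
  field_simp

lemma rawAct_coeff_ne_zero {G : Subgroup (PGL2 K)} {f : Polynomial K} (hf : f.Monic)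
    (hfR : NoRootsInOrbitInfty G f)
    (A : Matrix.GeneralLinearGroup (Fin 2) K) (hA : (QuotientGroup.mk A : PGL2 K) ∈ G) :
    (rawAct A f.natDegree f).coeff f.natDegree ≠ 0 := by
  have hinj : Function.Injective φ := (algebraMap K (AlgebraicClosure K)).injective
  set n := f.natDegree with hn
  rw [rawAct_coeff]
  intro h0
  by_cases hc : ent A 1 0 = 0
  · have ha : ent A 0 0 ≠ 0 := by
      intro ha0
      have := mulEnt (inv_mul_cancel A) 0 0
      rw [ha0, hc] at this
      simp at this
    rw [Finset.sum_eq_single n (fun i hi hine => by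
        have hi' := Finset.mem_range.mp hi
        rw [hc, zero_pow (by omega : n - i ≠ 0), mul_zero])
      (fun hne => absurd (Finset.self_mem_range_succ n) hne)] at h0
    rw [Nat.sub_self, pow_zero, mul_one, hn, Polynomial.Monic.coeff_natDegree hf, one_mul] at h0
    exact pow_ne_zero _ ha h0
  · have hφc : φ (ent A 1 0) ≠ 0 := fun h => hc (hinj (by rwa [map_zero]))
    have hφ0 : ∑ i ∈ Finset.range (n + 1),
        φ (f.coeff i) * (φ (ent A 0 0)) ^ i * (φ (ent A 1 0)) ^ (n - i) = 0 := by
      have := congrArg φ h0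
      simpa [map_sum, map_mul, map_pow] using this
    rw [sum_eval le_rfl _ hφc] at hφ0
    have hroot : Polynomial.aeval (φ (ent A 0 0) / φ (ent A 1 0)) f = 0 := by
      rcases mul_eq_zero.mp hφ0 with h | h
      · exact absurd h (pow_ne_zero n hφc)
      · exact h
    exact hfR _ ⟨A, hA, by rw [mob, if_neg hφc]⟩ hroot

lemma rawAct_ne_zero {G : Subgroup (PGL2 K)} {f : Polynomial K} (hf : f.Monic)
    (hfR : NoRootsInOrbitInfty G f)
    (A : Matrix.GeneralLinearGroup (Fin 2) K) (hA : (QuotientGroup.mk A : PGL2 K) ∈ G) :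
    rawAct A f.natDegree f ≠ 0 := fun h =>
  rawAct_coeff_ne_zero hf hfR A hA (by rw [h, Polynomial.coeff_zero])

lemma rawAct_natDegree {G : Subgroup (PGL2 K)} {f : Polynomial K} (hf : f.Monic)
    (hfR : NoRootsInOrbitInfty G f)
    (A : Matrix.GeneralLinearGroup (Fin 2) K) (hA : (QuotientGroup.mk A : PGL2 K) ∈ G) :
    (rawAct A f.natDegree f).natDegree = f.natDegree :=
  le_antisymm (rawAct_natDegree_le A _ f)
    (le_natDegree_of_ne_zero (rawAct_coeff_ne_zero hf hfR A hA))

lemma polyAct_monic {G : Subgroup (PGL2 K)} {f : Polynomial K} (hf : f.Monic)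
    (hfR : NoRootsInOrbitInfty G f)
    (A : Matrix.GeneralLinearGroup (Fin 2) K) (hA : (QuotientGroup.mk A : PGL2 K) ∈ G) :
    (polyAct A f).Monic :=
  monic_mul_leadingCoeff_inv (rawAct_ne_zero hf hfR A hA)

lemma polyAct_natDegree {G : Subgroup (PGL2 K)} {f : Polynomial K} (hf : f.Monic)
    (hfR : NoRootsInOrbitInfty G f)
    (A : Matrix.GeneralLinearGroup (Fin 2) K) (hA : (QuotientGroup.mk A : PGL2 K) ∈ G) :
    (polyAct A f).natDegree = f.natDegree := by
  have h1 : (rawAct A f.natDegree f).leadingCoeff⁻¹ ≠ 0 :=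
    inv_ne_zero (leadingCoeff_ne_zero.mpr (rawAct_ne_zero hf hfR A hA))
  rw [polyAct, natDegree_mul (rawAct_ne_zero hf hfR A hA) (by simpa using h1),
    natDegree_C, add_zero, rawAct_natDegree hf hfR A hA]

lemma aeval_polyAct_eq_zero_iff {G : Subgroup (PGL2 K)} {f : Polynomial K} (hf : f.Monic)
    (hfR : NoRootsInOrbitInfty G f)
    (A : Matrix.GeneralLinearGroup (Fin 2) K) (hA : (QuotientGroup.mk A : PGL2 K) ∈ G)
    {x : AlgebraicClosure K}
    (hden : φ (ent A 1 0) * x + φ (ent A 1 1) ≠ 0) :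
    Polynomial.aeval x (polyAct A f) = 0 ↔
      Polynomial.aeval ((φ (ent A 0 0) * x + φ (ent A 0 1)) /
        (φ (ent A 1 0) * x + φ (ent A 1 1))) f = 0 := by
  have hlc : φ ((rawAct A f.natDegree f).leadingCoeff⁻¹) ≠ 0 := by
    rw [_root_.map_ne_zero]
    exact inv_ne_zero (leadingCoeff_ne_zero.mpr (rawAct_ne_zero hf hfR A hA))
  rw [polyAct, map_mul, aeval_C, aeval_rawAct, sum_eval le_rfl _ hden]
  constructor
  · intro h
    rcases mul_eq_zero.mp h with h | h
    · rcases mul_eq_zero.mp h with h | h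
      · exact absurd h (pow_ne_zero _ hden)
      · exact h
    · exact absurd h hlc
  · intro h
    rw [h, mul_zero, zero_mul]

lemma mob_mob_inv (A : Matrix.GeneralLinearGroup (Fin 2) K) {x : AlgebraicClosure K}
    (h1 : φ (ent A⁻¹ 1 0) * x + φ (ent A⁻¹ 1 1) ≠ 0)
    (h2 : φ (ent A 1 0) * ((φ (ent A⁻¹ 0 0) * x + φ (ent A⁻¹ 0 1)) /
        (φ (ent A⁻¹ 1 0) * x + φ (ent A⁻¹ 1 1))) + φ (ent A 1 1) ≠ 0) :
    mob A (mob A⁻¹ (some x)) = some x := by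
  have Emap : ∀ i j, φ (ent A i 0) * φ (ent A⁻¹ 0 j) + φ (ent A i 1) * φ (ent A⁻¹ 1 j)
      = if i = j then 1 else 0 := fun i j => by
    have h := congrArg φ (mulEnt (mul_inv_cancel A) i j)
    simpa [map_add, map_mul, apply_ite φ, map_one, map_zero] using h
  have hinner : mob A⁻¹ (some x) = some ((φ (ent A⁻¹ 0 0) * x + φ (ent A⁻¹ 0 1)) /
      (φ (ent A⁻¹ 1 0) * x + φ (ent A⁻¹ 1 1))) := by rw [mob, if_neg h1]
  rw [hinner, mob, if_neg h2]
  congr 1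
  have E00 := Emap 0 0
  have E01 := Emap 0 1
  have E10 := Emap 1 0
  have E11 := Emap 1 1
  rw [if_pos rfl] at E00 E11
  rw [if_neg (by decide : ¬(0 : Fin 2) = 1)] at E01
  rw [if_neg (by decide : ¬(1 : Fin 2) = 0)] at E10
  set pa := φ (ent A 0 0) with hpa
  set pb := φ (ent A 0 1) with hpb
  set pc := φ (ent A 1 0) with hpc
  set pd := φ (ent A 1 1) with hpd
  set qa := φ (ent A⁻¹ 0 0) with hqa
  set qb := φ (ent A⁻¹ 0 1) with hqb
  set qc := φ (ent A⁻¹ 1 0) with hqc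
  set qd := φ (ent A⁻¹ 1 1) with hqd
  have hnum : pa * ((qa * x + qb) / (qc * x + qd)) + pb = x / (qc * x + qd) := by
    rw [eq_div_iff h1, add_mul, mul_assoc, div_mul_cancel₀ _ h1]
    linear_combination x * E00 + E01
  have hden' : pc * ((qa * x + qb) / (qc * x + qd)) + pd = 1 / (qc * x + qd) := by
    rw [eq_div_iff h1, add_mul, mul_assoc, div_mul_cancel₀ _ h1]
    linear_combination x * E10 + E11
  rw [hnum, hden']
  field_simp
  rw [mul_div_assoc, div_self (by rwa [mul_comm x qc]), mul_one]


end Helpers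

theorem invariant_iff_roots_stable {K : Type*} [Field K] (G : Subgroup (PGL2 K))
    (f : Polynomial K) (hf : f.Monic) (hfR : NoRootsInOrbitInfty G f) :
    (GInvariant G f →
      ∀ A : Matrix.GeneralLinearGroup (Fin 2) K, (QuotientGroup.mk A : PGL2 K) ∈ G →
        mob A '' (Option.some '' rootSetAC f) = Option.some '' rootSetAC f) ∧
    (Irreducible f →
      (∀ A : Matrix.GeneralLinearGroup (Fin 2) K, (QuotientGroup.mk A : PGL2 K) ∈ G →
        mob A '' (Option.some '' rootSetAC f) = Option.some '' rootSetAC f) →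
      GInvariant G f) := by
  set φ := algebraMap K (AlgebraicClosure K) with hφ
  constructor
  · intro hinv A hA
    have key : ∀ B : Matrix.GeneralLinearGroup (Fin 2) K, (QuotientGroup.mk B : PGL2 K) ∈ G →
        mob B '' (Option.some '' rootSetAC f) ⊆ Option.some '' rootSetAC f := by
      rintro B hB w ⟨_, ⟨y, hy, rfl⟩, rfl⟩
      have hy' : Polynomial.aeval y f = 0 := hy
      have hden := denom_ne_zero hfR B hB hy'
      have h1 : mob B (some y) = some ((φ (ent B 0 0) * y + φ (ent B 0 1)) /
          (φ (ent B 1 0) * y + φ (ent B 1 1))) := by rw [mob, if_neg hden]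
      rw [h1]
      refine ⟨_, ?_, rfl⟩
      show Polynomial.aeval _ f = 0
      exact (aeval_polyAct_eq_zero_iff hf hfR B hB hden).mp (by rw [hinv B hB]; exact hy')
    refine Set.Subset.antisymm (key A hA) ?_
    rintro _ ⟨x, hx, rfl⟩
    have hx' : Polynomial.aeval x f = 0 := hx
    have hBmem : (QuotientGroup.mk A⁻¹ : PGL2 K) ∈ G := by
      rw [QuotientGroup.mk_inv]; exact inv_mem hA
    have hden1 := denom_ne_zero hfR A⁻¹ hBmem hx'
    have hinner : mob A⁻¹ (some x) = some ((φ (ent A⁻¹ 0 0) * x + φ (ent A⁻¹ 0 1)) /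
        (φ (ent A⁻¹ 1 0) * x + φ (ent A⁻¹ 1 1))) := by rw [mob, if_neg hden1]
    set y := (φ (ent A⁻¹ 0 0) * x + φ (ent A⁻¹ 0 1)) /
        (φ (ent A⁻¹ 1 0) * x + φ (ent A⁻¹ 1 1)) with hy
    have hymem : some y ∈ Option.some '' rootSetAC f :=
      key A⁻¹ hBmem ⟨some x, ⟨x, hx, rfl⟩, hinner⟩
    obtain ⟨y', hy'root, hy'eq⟩ := hymem
    have hyroot : Polynomial.aeval y f = 0 := by
      have : y' = y := Option.some.inj hy'eq
      rw [← this]; exact hy'root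
    have hden2 := denom_ne_zero hfR A hA hyroot
    refine ⟨some y, ⟨y, hyroot, rfl⟩, ?_⟩
    have := mob_mob_inv A (x := x) hden1 (by rw [← hy]; exact hden2)
    rw [hinner] at this
    exact this
  · intro hirr hstab A hA
    have hdeg0 : f.degree ≠ 0 := (natDegree_pos_iff_degree_pos.mp hirr.natDegree_pos).ne'
    obtain ⟨x, hx⟩ := IsAlgClosed.exists_aeval_eq_zero (AlgebraicClosure K) f hdeg0
    have hden := denom_ne_zero hfR A hA hx
    have hval : mob A (some x) = some ((φ (ent A 0 0) * x + φ (ent A 0 1)) /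
        (φ (ent A 1 0) * x + φ (ent A 1 1))) := by rw [mob, if_neg hden]
    have hy : mob A (some x) ∈ Option.some '' rootSetAC f := by
      rw [← hstab A hA]
      exact ⟨some x, ⟨x, hx, rfl⟩, rfl⟩
    rw [hval] at hy
    obtain ⟨y, hyroot, hyeq⟩ := hy
    have hyroot' : Polynomial.aeval ((φ (ent A 0 0) * x + φ (ent A 0 1)) /
        (φ (ent A 1 0) * x + φ (ent A 1 1))) f = 0 := by
      rw [← Option.some.inj hyeq]; exact hyroot
    have hroot2 : Polynomial.aeval x (polyAct A f) = 0 :=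
      (aeval_polyAct_eq_zero_iff hf hfR A hA hden).mpr hyroot'
    have hmin : minpoly K x = f := (minpoly.eq_of_irreducible_of_monic hirr hx hf).symm
    have hdvd : f ∣ polyAct A f := by
      have h3 := minpoly.dvd K x hroot2
      rwa [hmin] at h3
    obtain ⟨t, ht⟩ := hdvd
    have hmonic := polyAct_monic hf hfR A hA
    have htm : t.Monic := hf.of_mul_monic_left (ht ▸ hmonic)
    have hdeg : t.natDegree = 0 := by
      have h2 := polyAct_natDegree hf hfR A hA
      rw [ht, hf.natDegree_mul htm] at h2
      omega
    rw [ht, htm.natDegree_eq_zero.mp hdeg, mul_one]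
end

section
/- Let K be a field, G an infinite subgroup of PGL₂(K), and v an element of the algebraic closure of K with [K(v):K] ≥ 3. Then the G-orbit of v under Möbius transformation is infinite; consequently there exist no G-invariant irreducible monic polynomials of degree greater than 2 in K[x]. -/
open Polynomial

attribute [local instance] Classical.propDecidable

section AuxProofs

variable {K : Type*} [Field K]

local notation "σ" => algebraMap K (AlgebraicClosure K)

/-- auxiliary "projectivization" map -/
noncomputable def pr (x y : AlgebraicClosure K) : Option (AlgebraicClosure K) :=
  if y = 0 then none else some (x / y)

lemma pr_none : (pr 1 0 : Option (AlgebraicClosure K)) = none := by simp [pr]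

lemma pr_some (v : AlgebraicClosure K) : pr v 1 = some v := by simp [pr]

lemma nondeg (A : Matrix.GeneralLinearGroup (Fin 2) K) {x y : AlgebraicClosure K}
    (h : ¬ (x = 0 ∧ y = 0)) :
    ¬ (σ (ent A 0 0) * x + σ (ent A 0 1) * y = 0 ∧
       σ (ent A 1 0) * x + σ (ent A 1 1) * y = 0) := by
  rintro ⟨h1, h2⟩
  have hdet : (A : Matrix (Fin 2) (Fin 2) K).det ≠ 0 :=
    IsUnit.ne_zero ((Matrix.isUnit_iff_isUnit_det _).mp A.isUnit)
  rw [Matrix.det_fin_two] at hdet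
  have hdet' : σ (ent A 0 0) * σ (ent A 1 1) - σ (ent A 0 1) * σ (ent A 1 0) ≠ 0 := by
    intro hz
    apply hdet
    apply (algebraMap K (AlgebraicClosure K)).injective
    rw [map_sub, map_mul, map_mul, map_zero]
    exact hz
  apply h
  constructor
  · have hx : (σ (ent A 0 0) * σ (ent A 1 1) - σ (ent A 0 1) * σ (ent A 1 0)) * x = 0 := by
      linear_combination σ (ent A 1 1) * h1 - σ (ent A 0 1) * h2
    exact (mul_eq_zero.mp hx).resolve_left hdet'
  · have hy : (σ (ent A 0 0) * σ (ent A 1 1) - σ (ent A 0 1) * σ (ent A 1 0)) * y = 0 := by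
      linear_combination σ (ent A 0 0) * h2 - σ (ent A 1 0) * h1
    exact (mul_eq_zero.mp hy).resolve_left hdet'

lemma mob_pr (A : Matrix.GeneralLinearGroup (Fin 2) K) {x y : AlgebraicClosure K}
    (h : ¬ (x = 0 ∧ y = 0)) :
    mob A (pr x y) = pr (σ (ent A 0 0) * x + σ (ent A 0 1) * y)
      (σ (ent A 1 0) * x + σ (ent A 1 1) * y) := by
  by_cases hy : y = 0
  · subst hy
    have hx : x ≠ 0 := fun hx => h ⟨hx, rfl⟩
    have h1 : pr x (0 : AlgebraicClosure K) = none := if_pos rfl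
    rw [h1]
    show (if σ (ent A 1 0) = 0 then none
      else some (σ (ent A 0 0) / σ (ent A 1 0))) = _
    simp only [mul_zero, add_zero]
    by_cases hc : σ (ent A 1 0) = 0
    · simp [pr, hc]
    · have hne2 : σ (ent A 1 0) * x ≠ 0 := mul_ne_zero hc hx
      rw [if_neg hc, pr, if_neg hne2, mul_div_mul_right _ _ hx]
  · have hxy : x / y * y = x := div_mul_cancel₀ x hy
    simp only [pr, if_neg hy, mob]
    have hden : σ (ent A 1 0) * (x / y) + σ (ent A 1 1) =
        (σ (ent A 1 0) * x + σ (ent A 1 1) * y) / y := by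
      field_simp
    by_cases hc : σ (ent A 1 0) * x + σ (ent A 1 1) * y = 0
    · rw [hden, hc, zero_div, if_pos rfl, if_pos rfl]
    · have hc' : σ (ent A 1 0) * (x / y) + σ (ent A 1 1) ≠ 0 := by
        rw [hden]
        exact div_ne_zero hc hy
      rw [if_neg hc', if_neg hc]
      congr 1
      rw [hden]
      have hnum : σ (ent A 0 0) * (x / y) + σ (ent A 0 1) =
          (σ (ent A 0 0) * x + σ (ent A 0 1) * y) / y := by field_simp
      rw [hnum]
      rw [div_div_div_cancel_right₀]
      exact hy

lemma exists_pr (p : Option (AlgebraicClosure K)) :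
    ∃ x y : AlgebraicClosure K, ¬ (x = 0 ∧ y = 0) ∧ pr x y = p := by
  cases p with
  | none => exact ⟨1, 0, by simp, pr_none⟩
  | some v => exact ⟨v, 1, by simp, pr_some v⟩

lemma mob_mul (A B : Matrix.GeneralLinearGroup (Fin 2) K) (p : Option (AlgebraicClosure K)) :
    mob (A * B) p = mob A (mob B p) := by
  obtain ⟨x, y, hxy, rfl⟩ := exists_pr p
  have hent : ∀ i j : Fin 2, ent (A * B) i j =
      ent A i 0 * ent B 0 j + ent A i 1 * ent B 1 j := by
    intro i j
    simp [ent, Matrix.mul_apply, Fin.sum_univ_two]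
  have hB := nondeg B hxy
  rw [mob_pr B hxy, mob_pr A hB, mob_pr (A * B) hxy]
  congr 1 <;> · rw [hent, hent]; push_cast [map_add, map_mul]; ring

lemma mob_one (p : Option (AlgebraicClosure K)) :
    mob (1 : Matrix.GeneralLinearGroup (Fin 2) K) p = p := by
  have h0 : ent (1 : Matrix.GeneralLinearGroup (Fin 2) K) 1 0 = 0 := by
    simp [ent, Matrix.one_apply]
  have h1 : ent (1 : Matrix.GeneralLinearGroup (Fin 2) K) 1 1 = 1 := by
    simp [ent, Matrix.one_apply]
  have h2 : ent (1 : Matrix.GeneralLinearGroup (Fin 2) K) 0 0 = 1 := by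
    simp [ent, Matrix.one_apply]
  have h3 : ent (1 : Matrix.GeneralLinearGroup (Fin 2) K) 0 1 = 0 := by
    simp [ent, Matrix.one_apply]
  cases p with
  | none => simp [mob, h0]
  | some x => simp [mob, h0, h1, h2, h3]

/-- The stabilizer of a point of degree ≥ 3 is trivial. -/
lemma stab_triv {v : AlgebraicClosure K} (hv : 3 ≤ (minpoly K v).natDegree)
    (A : Matrix.GeneralLinearGroup (Fin 2) K) (hA : mob A (some v) = some v) :
    (QuotientGroup.mk A : PGL2 K) = 1 := by
  -- extract the algebraic relation
  simp only [mob] at hA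
  by_cases hden : σ (ent A 1 0) * v + σ (ent A 1 1) = 0
  · rw [if_pos hden] at hA; exact absurd hA (by simp)
  rw [if_neg hden] at hA
  have heq : σ (ent A 0 0) * v + σ (ent A 0 1) =
      v * (σ (ent A 1 0) * v + σ (ent A 1 1)) := by
    have := Option.some_injective _ hA
    rw [div_eq_iff hden] at this
    exact this
  set p : Polynomial K := C (ent A 1 0) * X ^ 2 + C (ent A 1 1 - ent A 0 0) * X
      - C (ent A 0 1) with hp
  have hroot : Polynomial.aeval v p = 0 := by
    simp only [hp, map_sub, map_add, map_mul, map_pow, aeval_C, aeval_X]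
    linear_combination -heq
  have hp0 : p = 0 := by
    by_contra hne
    have hdvd : minpoly K v ∣ p := minpoly.dvd K v hroot
    have hle : (minpoly K v).natDegree ≤ p.natDegree :=
      Polynomial.natDegree_le_of_dvd hdvd hne
    have hd2 : p.natDegree ≤ 2 := by
      rw [hp]; compute_degree
    omega
  have hc : ent A 1 0 = 0 := by
    have := congrArg (fun q => Polynomial.coeff q 2) hp0
    simpa [hp, coeff_C] using this
  have hb : ent A 0 1 = 0 := by
    have := congrArg (fun q => Polynomial.coeff q 0) hp0
    simpa [hp, coeff_C] using this
  have hda : ent A 1 1 = ent A 0 0 := by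
    have := congrArg (fun q => Polynomial.coeff q 1) hp0
    simp [hp, coeff_C] at this
    exact sub_eq_zero.mp this
  rw [QuotientGroup.eq_one_iff]
  rw [Subgroup.mem_center_iff]
  intro g
  apply Units.ext
  have hAval : (A : Matrix (Fin 2) (Fin 2) K) = ent A 0 0 • (1 : Matrix (Fin 2) (Fin 2) K) := by
    ext i j
    fin_cases i <;> fin_cases j <;>
      simp [ent, Matrix.one_apply, hc, hb, hda] <;>
      first
        | rfl
        | (exact hb) | (exact hc) | (exact hda)
  show (g : Matrix (Fin 2) (Fin 2) K) * (A : Matrix (Fin 2) (Fin 2) K)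
      = (A : Matrix (Fin 2) (Fin 2) K) * (g : Matrix (Fin 2) (Fin 2) K)
  rw [hAval, Matrix.mul_smul, Matrix.smul_mul, Matrix.mul_one, Matrix.one_mul]

/-- Main orbit-infinitude lemma. -/
lemma orbit_infinite_of_min3 (G : Subgroup (PGL2 K))
    (hG : (G : Set (PGL2 K)).Infinite) {v : AlgebraicClosure K}
    (hv : 3 ≤ (minpoly K v).natDegree) : (mobOrbit G (some v)).Infinite := by
  by_contra hfin
  rw [Set.not_infinite] at hfin
  set rep : PGL2 K → Matrix.GeneralLinearGroup (Fin 2) K :=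
    Function.surjInv (QuotientGroup.mk_surjective) with hrep
  have hrepeq : ∀ g : PGL2 K, (QuotientGroup.mk (rep g) : PGL2 K) = g := fun g =>
    Function.surjInv_eq _ g
  have hmaps : Set.MapsTo (fun g : PGL2 K => mob (rep g) (some v)) (G : Set (PGL2 K))
      (mobOrbit G (some v)) := by
    intro g hg
    exact ⟨rep g, by rw [hrepeq]; exact hg, rfl⟩
  obtain ⟨g, hg, g', hg', hne, heq⟩ := hG.exists_ne_map_eq_of_mapsTo hmaps hfin
  have hstab : mob ((rep g')⁻¹ * rep g) (some v) = some v := by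
    rw [mob_mul, heq, ← mob_mul, inv_mul_cancel, mob_one]
  have h1 := stab_triv hv _ hstab
  rw [QuotientGroup.mk_mul, QuotientGroup.mk_inv, hrepeq, hrepeq] at h1
  exact hne (inv_mul_eq_one.mp h1).symm

lemma aeval_rawAct_s5 (A : Matrix.GeneralLinearGroup (Fin 2) K) (f : Polynomial K)
    {z : AlgebraicClosure K} (hden : σ (ent A 1 0) * z + σ (ent A 1 1) ≠ 0) :
    Polynomial.aeval z (rawAct A f.natDegree f) =
      (σ (ent A 1 0) * z + σ (ent A 1 1)) ^ f.natDegree *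
        Polynomial.aeval ((σ (ent A 0 0) * z + σ (ent A 0 1)) /
          (σ (ent A 1 0) * z + σ (ent A 1 1))) f := by
  set u := σ (ent A 0 0) * z + σ (ent A 0 1) with hu
  set w := σ (ent A 1 0) * z + σ (ent A 1 1) with hw
  rw [Polynomial.aeval_eq_sum_range (p := f) (u / w), Finset.mul_sum]
  rw [rawAct, map_sum]
  apply Finset.sum_congr rfl
  intro i hi
  rw [Finset.mem_range] at hi
  have hi' : i ≤ f.natDegree := Nat.lt_succ_iff.mp hi
  simp only [map_mul, map_pow, map_add, aeval_C, aeval_X]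
  rw [Algebra.smul_def, div_pow, ← hu, ← hw, ← pow_sub_mul_pow w hi']
  have hwi : w ^ i ≠ 0 := pow_ne_zero _ hden
  field_simp

end AuxProofs

theorem infinite_group_no_invariant {K : Type*} [Field K] (G : Subgroup (PGL2 K))
    (hG : (G : Set (PGL2 K)).Infinite) (v : AlgebraicClosure K)
    (hv : 3 ≤ (minpoly K v).natDegree) :
    (mobOrbit G (some v)).Infinite ∧
      ∀ f : Polynomial K, f.Monic → Irreducible f → 2 < f.natDegree →
        NoRootsInOrbitInfty G f → ¬ GInvariant G f := by
  constructor
  · exact orbit_infinite_of_min3 G hG hv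
  · intro f hmonic hirr hdeg _ hinv
    -- find a root of f in the algebraic closure
    have hf0 : f ≠ 0 := hmonic.ne_zero
    have hmapdeg : (f.map (algebraMap K (AlgebraicClosure K))).natDegree = f.natDegree :=
      (hmonic.natDegree_map _)
    have hdegne : (f.map (algebraMap K (AlgebraicClosure K))).degree ≠ 0 := by
      intro h
      have := Polynomial.natDegree_eq_zero_iff_degree_le_zero.mpr (le_of_eq h)
      omega
    obtain ⟨x, hx⟩ := IsAlgClosed.exists_root _ hdegne
    have hxroot : Polynomial.aeval x f = 0 := by
      rwa [Polynomial.aeval_def, ← Polynomial.eval_map]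
    have hminx : minpoly K x = f := (minpoly.eq_of_irreducible_of_monic hirr hxroot hmonic).symm
    have hx3 : 3 ≤ (minpoly K x).natDegree := by rw [hminx]; omega
    have hinf := orbit_infinite_of_min3 G hG hx3
    -- the orbit is contained in a finite set
    have hsub : mobOrbit G (some x) ⊆
        insert none (some '' {y : AlgebraicClosure K | Polynomial.aeval y f = 0}) := by
      rintro w ⟨A, hA, hw⟩
      cases w with
      | none => exact Set.mem_insert _ _
      | some y =>
        right
        refine ⟨y, ?_, rfl⟩
        have hback : mob A⁻¹ (some y) = some x := by
          rw [← hw, ← mob_mul, inv_mul_cancel, mob_one]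
        have hAinv : (QuotientGroup.mk A⁻¹ : PGL2 K) ∈ G := by
          rw [QuotientGroup.mk_inv]; exact inv_mem hA
        simp only [mob] at hback
        by_cases hden : (algebraMap K (AlgebraicClosure K)) (ent A⁻¹ 1 0) * y +
            (algebraMap K (AlgebraicClosure K)) (ent A⁻¹ 1 1) = 0
        · rw [if_pos hden] at hback; exact absurd hback (by simp)
        rw [if_neg hden] at hback
        have hval := Option.some_injective _ hback
        have hkey := aeval_rawAct_s5 A⁻¹ f hden
        rw [hval, hxroot, mul_zero] at hkey
        have hpoly := hinv A⁻¹ hAinv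
        rw [polyAct] at hpoly
        have := congrArg (Polynomial.aeval y) hpoly
        rw [map_mul, hkey, zero_mul] at this
        exact this.symm
    have hroots : ({y : AlgebraicClosure K | Polynomial.aeval y f = 0}).Finite := by
      have hmapne : f.map (algebraMap K (AlgebraicClosure K)) ≠ 0 := by
        intro h
        apply hf0
        exact (Polynomial.map_eq_zero_iff (algebraMap K (AlgebraicClosure K)).injective).mp h
      have := Polynomial.finite_setOf_isRoot hmapne
      convert this using 1
      ext y
      simp only [Set.mem_setOf_eq, Polynomial.IsRoot]
      rw [Polynomial.aeval_def, ← Polynomial.eval_map]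
    exact (hinf.mono hsub) ((hroots.image _).insert none)
end

section
/- Let K be a field and G a finite subgroup of PGL₂(K) with quotient map Q_G = g/h (g monic, deg g = |G| > deg h, K(Q_G) = K(x)^G). Then for every monic polynomial F ∈ K[x], the transform F^{Q_G}(x) = h(x)^{deg F} F(g(x)/h(x)) is a monic polynomial with no roots in the G-orbit of ∞, and F^{Q_G} is G-invariant under the normalized PGL₂-action on polynomials. -/
open Polynomial

attribute [local instance] Classical.propDecidable

noncomputable section AuxQT

open Polynomial

variable {K : Type*} [Field K]

/-- numerator linear polynomial of `A` -/
def upol (A : Matrix.GeneralLinearGroup (Fin 2) K) : Polynomial K :=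
  C (ent A 0 0) * X + C (ent A 0 1)

/-- denominator linear polynomial of `A` -/
def wpol (A : Matrix.GeneralLinearGroup (Fin 2) K) : Polynomial K :=
  C (ent A 1 0) * X + C (ent A 1 1)

lemma rawAct_eq (A : Matrix.GeneralLinearGroup (Fin 2) K) (m : ℕ) (p : Polynomial K) :
    rawAct A m p = ∑ i ∈ Finset.range (m + 1),
      C (p.coeff i) * upol A ^ i * wpol A ^ (m - i) := rfl

lemma algC (c : K) :
    algebraMap (Polynomial K) (RatFunc K) (C c) = algebraMap K (RatFunc K) c := by
  rw [IsScalarTower.algebraMap_apply K (Polynomial K) (RatFunc K), Polynomial.algebraMap_eq]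

lemma wpol_ne_zero (A : Matrix.GeneralLinearGroup (Fin 2) K) : wpol A ≠ 0 := by
  intro hw
  have hc : ent A 1 0 = 0 := by
    have := congrArg (fun p => Polynomial.coeff p 1) hw
    simpa [wpol] using this
  have hd : ent A 1 1 = 0 := by
    have := congrArg (fun p => Polynomial.coeff p 0) hw
    simpa [wpol, hc] using this
  have hdet : IsUnit ((A : Matrix (Fin 2) (Fin 2) K).det) :=
    (Matrix.isUnit_iff_isUnit_det _).mp A.isUnit
  rw [Matrix.det_fin_two] at hdet
  have e1 : ((A : Matrix (Fin 2) (Fin 2) K)) 1 0 = 0 := hc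
  have e2 : ((A : Matrix (Fin 2) (Fin 2) K)) 1 1 = 0 := hd
  rw [e1, e2] at hdet
  simp at hdet

lemma natDegree_rawAct_le (A : Matrix.GeneralLinearGroup (Fin 2) K) (m : ℕ) (p : Polynomial K) :
    (rawAct A m p).natDegree ≤ m := by
  rw [rawAct_eq]
  refine natDegree_sum_le_of_forall_le _ _ fun i hi => ?_
  have hi' : i ≤ m := Nat.lt_succ_iff.mp (Finset.mem_range.mp hi)
  calc (C (p.coeff i) * upol A ^ i * wpol A ^ (m - i)).natDegree
      ≤ (C (p.coeff i) * upol A ^ i).natDegree + (wpol A ^ (m - i)).natDegree :=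
        natDegree_mul_le
    _ ≤ ((C (p.coeff i)).natDegree + (upol A ^ i).natDegree) + (wpol A ^ (m - i)).natDegree :=
        Nat.add_le_add_right natDegree_mul_le _
    _ ≤ (0 + i * 1) + (m - i) * 1 := by
        gcongr
        · simp
        · exact natDegree_pow_le.trans (by gcongr; exact natDegree_linear_le)
        · exact natDegree_pow_le.trans (by gcongr; exact natDegree_linear_le)
    _ ≤ m := by omega

/-- Image of `rawAct` in the rational function field. -/
lemma rawAct_ratfunc (A : Matrix.GeneralLinearGroup (Fin 2) K) {m : ℕ} {p : Polynomial K}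
    (hm : p.natDegree ≤ m) :
    algebraMap (Polynomial K) (RatFunc K) (rawAct A m p) =
      algebraMap (Polynomial K) (RatFunc K) (wpol A) ^ m *
        Polynomial.aeval (algebraMap (Polynomial K) (RatFunc K) (upol A) /
          algebraMap (Polynomial K) (RatFunc K) (wpol A)) p := by
  set ι := algebraMap (Polynomial K) (RatFunc K)
  set U := ι (upol A) with hU
  set W := ι (wpol A) with hW'
  have hW : W ≠ 0 := RatFunc.algebraMap_ne_zero (wpol_ne_zero A)
  rw [Polynomial.aeval_eq_sum_range' (Nat.lt_succ_of_le hm), rawAct_eq, map_sum, Finset.mul_sum]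
  refine Finset.sum_congr rfl fun i hi => ?_
  have hi' : i ≤ m := Nat.lt_succ_iff.mp (Finset.mem_range.mp hi)
  rw [map_mul, map_mul, map_pow, map_pow, ← hU, ← hW', algC,
    Algebra.smul_def, div_pow,
    show W ^ m = W ^ (m - i) * W ^ i from (pow_sub_mul_pow W hi').symm]
  field_simp

/-- The scalar relating `rawAct A n g` to `g` for `A ∈ G`. -/
lemma exists_scalar {G : Subgroup (PGL2 K)} {g h : Polynomial K}
    (hQ : IsQuotientMap G g h) (A : Matrix.GeneralLinearGroup (Fin 2) K)
    (hA : (QuotientGroup.mk A : PGL2 K) ∈ G) :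
    ∃ l : K, l ≠ 0 ∧ rawAct A g.natDegree g = C l * g ∧
      rawAct A g.natDegree h = C l * h := by
  set n := g.natDegree with hn
  have hg0 : g ≠ 0 := hQ.monic_g.ne_zero
  have hinv := hQ.invariant A hA
  set ι := algebraMap (Polynomial K) (RatFunc K) with hι
  set z := ι (upol A) / ι (wpol A) with hz
  have hW : ι (wpol A) ≠ 0 := RatFunc.algebraMap_ne_zero (wpol_ne_zero A)
  have hGA : rawAct A n g ≠ 0 := by
    intro h0
    have hHA : rawAct A n h = 0 := by
      have : rawAct A n h * g = 0 := by rw [← hinv, h0, zero_mul]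
      exact (mul_eq_zero.mp this).resolve_right hg0
    have hzg : Polynomial.aeval z g = 0 := by
      have h2 := rawAct_ratfunc A (m := n) (p := g) (le_refl n)
      rw [h0, map_zero] at h2
      exact ((mul_eq_zero.mp h2.symm).resolve_left (pow_ne_zero _ hW))
    have hzh : Polynomial.aeval z h = 0 := by
      have h2 := rawAct_ratfunc A (m := n) (p := h) (le_of_lt hQ.deg_lt)
      rw [hHA, map_zero] at h2
      exact ((mul_eq_zero.mp h2.symm).resolve_left (pow_ne_zero _ hW))
    have hcop : IsCoprime (Polynomial.aeval z g) (Polynomial.aeval z h) :=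
      hQ.coprime.map (Polynomial.aeval z).toRingHom
    rw [hzg, hzh] at hcop
    exact not_isUnit_zero (isCoprime_zero_left.mp hcop)
  have hdvd : g ∣ rawAct A n g :=
    hQ.coprime.dvd_of_dvd_mul_right (by rw [hinv]; exact dvd_mul_left g _)
  obtain ⟨s, hs⟩ := hdvd
  have hs0 : s ≠ 0 := by
    intro h0; rw [h0, mul_zero] at hs; exact hGA hs
  have hsdeg : s.natDegree = 0 := by
    have hle := natDegree_rawAct_le A n g
    rw [hs, natDegree_mul hg0 hs0] at hle
    omega
  set l := s.coeff 0 with hl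
  have hsl : s = C l := Polynomial.eq_C_of_natDegree_eq_zero hsdeg
  have hl0 : l ≠ 0 := by
    intro h0; rw [h0, map_zero] at hsl; exact hs0 hsl
  refine ⟨l, hl0, by rw [hs, hsl, mul_comm], ?_⟩
  have hcancel : rawAct A n h * g = (C l * h) * g := by
    rw [← hinv, hs, hsl]; ring
  exact mul_right_cancel₀ hg0 hcancel

/-- Monicity and degree of the `Q`-transform. -/
lemma qtransform_monic {g h : Polynomial K}
    (hg : g.Monic) (hdlt : h.natDegree < g.natDegree)
    {F : Polynomial K} (hF : F.Monic) :
    (Qtransform g h F).Monic ∧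
      (Qtransform g h F).natDegree = F.natDegree * g.natDegree := by
  set n := g.natDegree with hn
  set N := F.natDegree with hN
  have hg0 : g ≠ 0 := hg.ne_zero
  have hsplit : Qtransform g h F =
      (∑ i ∈ Finset.range N, C (F.coeff i) * g ^ i * h ^ (N - i)) + g ^ N := by
    rw [Qtransform, Finset.sum_range_succ, ← hN, hF.coeff_natDegree]
    simp
  have hdegS : (∑ i ∈ Finset.range N, C (F.coeff i) * g ^ i * h ^ (N - i)).degree <
      (g ^ N).degree := by
    rw [degree_eq_natDegree (pow_ne_zero N hg0), natDegree_pow, ← hn]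
    refine lt_of_le_of_lt (degree_sum_le _ _) ?_
    rw [Finset.sup_lt_iff (WithBot.bot_lt_coe _)]
    intro i hi
    have hiN : i < N := Finset.mem_range.mp hi
    have hterm : (C (F.coeff i) * g ^ i * h ^ (N - i)).natDegree < N * n := by
      have h1 : (C (F.coeff i) * g ^ i * h ^ (N - i)).natDegree ≤
          i * n + (N - i) * h.natDegree := by
        calc (C (F.coeff i) * g ^ i * h ^ (N - i)).natDegree
            ≤ (C (F.coeff i) * g ^ i).natDegree + (h ^ (N - i)).natDegree :=
              natDegree_mul_le
          _ ≤ ((C (F.coeff i)).natDegree + (g ^ i).natDegree) + (h ^ (N - i)).natDegree :=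
              Nat.add_le_add_right natDegree_mul_le _
          _ ≤ (0 + i * n) + (N - i) * h.natDegree := by
              gcongr
              · simp
              · exact natDegree_pow_le
              · exact natDegree_pow_le
          _ = i * n + (N - i) * h.natDegree := by ring
      have h2 : (N - i) * h.natDegree < (N - i) * n := by
        have hpos : 0 < N - i := by omega
        exact (Nat.mul_lt_mul_left hpos).mpr hdlt
      have h3 : i * n + (N - i) * n = N * n := by
        rw [← add_mul]; congr 1; omega
      omega
    calc (C (F.coeff i) * g ^ i * h ^ (N - i)).degree
        ≤ ((C (F.coeff i) * g ^ i * h ^ (N - i)).natDegree : WithBot ℕ) :=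
          degree_le_natDegree
      _ < ((N * n : ℕ) : WithBot ℕ) := by exact_mod_cast hterm
  constructor
  · rw [hsplit]; exact (hg.pow N).add_of_right hdegS
  · rw [hsplit, natDegree_eq_of_degree_eq (degree_add_eq_right_of_degree_lt hdegS),
      natDegree_pow]

/-- `rawAct` of the `Q`-transform is a scalar multiple of the `Q`-transform. -/
lemma rawAct_qtransform {g h : Polynomial K}
    (A : Matrix.GeneralLinearGroup (Fin 2) K) {l : K}
    (hgA : rawAct A g.natDegree g = C l * g)
    (hhA : rawAct A g.natDegree h = C l * h)
    (hdlt : h.natDegree ≤ g.natDegree)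
    {F : Polynomial K}
    (hdeg : (Qtransform g h F).natDegree ≤ F.natDegree * g.natDegree) :
    rawAct A (F.natDegree * g.natDegree) (Qtransform g h F) =
      C (l ^ F.natDegree) * Qtransform g h F := by
  set n := g.natDegree with hn
  set N := F.natDegree with hN
  apply RatFunc.algebraMap_injective K
  set ι := algebraMap (Polynomial K) (RatFunc K) with hι
  set z := ι (upol A) / ι (wpol A) with hz
  set W := ι (wpol A) with hWdef
  have hgz : W ^ n * Polynomial.aeval z g = algebraMap K (RatFunc K) l * ι g := by
    have h2 := rawAct_ratfunc A (m := n) (p := g) (le_refl n)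
    rw [hgA, map_mul] at h2
    rw [← hz, ← hWdef, algC] at h2
    rw [← h2]
  have hhz : W ^ n * Polynomial.aeval z h = algebraMap K (RatFunc K) l * ι h := by
    have h2 := rawAct_ratfunc A (m := n) (p := h) hdlt
    rw [hhA, map_mul] at h2
    rw [← hz, ← hWdef, algC] at h2
    rw [← h2]
  rw [rawAct_ratfunc A hdeg, map_mul, ← hWdef, ← hz]
  have hQsum : Polynomial.aeval z (Qtransform g h F) =
      ∑ i ∈ Finset.range (N + 1), algebraMap K (RatFunc K) (F.coeff i) *
        (Polynomial.aeval z g) ^ i * (Polynomial.aeval z h) ^ (N - i) := by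
    rw [Qtransform, map_sum]
    exact Finset.sum_congr rfl fun i _ => by
      rw [map_mul, map_mul, map_pow, map_pow, Polynomial.aeval_C]
  have hQι : ι (Qtransform g h F) =
      ∑ i ∈ Finset.range (N + 1), algebraMap K (RatFunc K) (F.coeff i) *
        (ι g) ^ i * (ι h) ^ (N - i) := by
    rw [Qtransform, map_sum]
    exact Finset.sum_congr rfl fun i _ => by
      rw [map_mul, map_mul, map_pow, map_pow, algC]
  rw [hQsum, hQι, algC, Finset.mul_sum, Finset.mul_sum]
  refine Finset.sum_congr rfl fun i hi => ?_
  have hiN : i ≤ N := Nat.lt_succ_iff.mp (Finset.mem_range.mp hi)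
  set al := algebraMap K (RatFunc K) l with hal
  set Gz := Polynomial.aeval z g
  set Hz := Polynomial.aeval z h
  have hWN : W ^ (N * n) = (W ^ n) ^ i * (W ^ n) ^ (N - i) := by
    rw [← pow_add, ← pow_mul, Nat.add_sub_cancel' hiN, Nat.mul_comm]
  have halN : al ^ N = al ^ i * al ^ (N - i) := by
    rw [← pow_add]; congr 1; omega
  calc W ^ (N * n) * (algebraMap K (RatFunc K) (F.coeff i) * Gz ^ i * Hz ^ (N - i))
      = algebraMap K (RatFunc K) (F.coeff i) * (W ^ n * Gz) ^ i *
          (W ^ n * Hz) ^ (N - i) := by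
        rw [hWN, mul_pow, mul_pow]; ring
    _ = algebraMap K (RatFunc K) (F.coeff i) * (al * ι g) ^ i * (al * ι h) ^ (N - i) := by
        rw [hgz, hhz]
    _ = algebraMap K (RatFunc K) (l ^ N) *
          (algebraMap K (RatFunc K) (F.coeff i) * ι g ^ i * ι h ^ (N - i)) := by
        rw [map_pow, ← hal, halN, mul_pow, mul_pow]; ring

end AuxQT

theorem Qtransform_GInvariant {K : Type*} [Field K] (G : Subgroup (PGL2 K))
    (hGfin : (G : Set (PGL2 K)).Finite) (g h : Polynomial K)
    (hQ : IsQuotientMap G g h) (F : Polynomial K) (hF : F.Monic) :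
    (Qtransform g h F).Monic ∧ NoRootsInOrbitInfty G (Qtransform g h F) ∧
      GInvariant G (Qtransform g h F) := by
  obtain ⟨hmon, hdeg⟩ := qtransform_monic hQ.monic_g hQ.deg_lt hF
  refine ⟨hmon, ?_, ?_⟩
  · -- no roots in the orbit of infinity
    intro x hx
    obtain ⟨A, hA, hmob⟩ := hx
    set φ := algebraMap K (AlgebraicClosure K) with hφ
    have hmob' : (if φ (ent A 1 0) = 0 then none
        else some (φ (ent A 0 0) / φ (ent A 1 0))) = some x := hmob
    by_cases hc : φ (ent A 1 0) = 0
    · rw [if_pos hc] at hmob'; exact absurd hmob' (by simp)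
    rw [if_neg hc] at hmob'
    have hx' : x = φ (ent A 0 0) / φ (ent A 1 0) := (Option.some_injective _ hmob').symm
    obtain ⟨l, hl0, hgA, hhA⟩ := exists_scalar hQ A hA
    set n := g.natDegree with hn
    set a := ent A 0 0 with ha
    set c := ent A 1 0 with hcdef
    -- the key coefficient identity
    have hkey : ∑ i ∈ Finset.range (n + 1), h.coeff i * a ^ i * c ^ (n - i) = 0 := by
      have h1 : (rawAct A n h).coeff n =
          ∑ i ∈ Finset.range (n + 1), h.coeff i * a ^ i * c ^ (n - i) := by
        rw [rawAct_eq, finset_sum_coeff]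
        refine Finset.sum_congr rfl fun i hi => ?_
        have hi' : i ≤ n := Nat.lt_succ_iff.mp (Finset.mem_range.mp hi)
        have hd1 : (C (h.coeff i) * upol A ^ i).natDegree ≤ i := by
          refine natDegree_mul_le.trans ?_
          have : (upol A ^ i).natDegree ≤ i * 1 :=
            natDegree_pow_le.trans (by gcongr; exact natDegree_linear_le)
          simp only [natDegree_C, zero_add]
          omega
        have hd2 : (wpol A ^ (n - i)).natDegree ≤ n - i := by
          have : (wpol A ^ (n - i)).natDegree ≤ (n - i) * 1 :=
            natDegree_pow_le.trans (by gcongr; exact natDegree_linear_le)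
          omega
        have h2 := coeff_mul_add_eq_of_natDegree_le hd1 hd2
        rw [show i + (n - i) = n from by omega] at h2
        rw [h2, coeff_C_mul]
        have hu : (upol A ^ i).coeff i = a ^ i := by
          have h3 := coeff_pow_of_natDegree_le (p := upol A) (n := 1) (m := i)
            natDegree_linear_le
          rw [mul_one] at h3
          rw [h3]
          congr 1
          simp [upol, ha]
        have hw : (wpol A ^ (n - i)).coeff (n - i) = c ^ (n - i) := by
          have h3 := coeff_pow_of_natDegree_le (p := wpol A) (n := 1) (m := n - i)
            natDegree_linear_le
          rw [mul_one] at h3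
          rw [h3]
          congr 1
          simp [wpol, hcdef]
        rw [hu, hw]
      rw [hhA, coeff_C_mul, coeff_eq_zero_of_natDegree_lt hQ.deg_lt, mul_zero] at h1
      exact h1.symm
    have hxh : Polynomial.aeval x h = 0 := by
      have hcn : φ c ^ n ≠ 0 := pow_ne_zero _ hc
      have hmain : φ c ^ n * Polynomial.aeval x h = 0 := by
        rw [Polynomial.aeval_eq_sum_range' (Nat.lt_succ_of_le (le_of_lt hQ.deg_lt)),
          Finset.mul_sum, ← map_zero φ, ← hkey, map_sum]
        refine Finset.sum_congr rfl fun i hi => ?_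
        have hi' : i ≤ n := Nat.lt_succ_iff.mp (Finset.mem_range.mp hi)
        rw [hx', Algebra.smul_def, div_pow, map_mul, map_mul, map_pow, map_pow,
          show φ c ^ n = φ c ^ (n - i) * φ c ^ i from (pow_sub_mul_pow _ hi').symm]
        have hci : φ c ^ i ≠ 0 := pow_ne_zero _ hc
        field_simp
        ring
      exact (mul_eq_zero.mp hmain).resolve_left hcn
    have hxg : Polynomial.aeval x g ≠ 0 := by
      have hcop : IsCoprime (Polynomial.aeval x g) (Polynomial.aeval x h) :=
        hQ.coprime.map (Polynomial.aeval x).toRingHom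
      rw [hxh] at hcop
      exact (isCoprime_zero_right.mp hcop).ne_zero
    have hval : Polynomial.aeval x (Qtransform g h F) =
        (Polynomial.aeval x g) ^ F.natDegree := by
      rw [Qtransform, map_sum, Finset.sum_range_succ]
      simp only [map_mul, map_pow, Polynomial.aeval_C, hxh]
      rw [Finset.sum_eq_zero, zero_add, hF.coeff_natDegree, map_one, one_mul,
        Nat.sub_self, pow_zero, mul_one]
      intro i hi
      have hi' : F.natDegree - i ≠ 0 := by
        have := Finset.mem_range.mp hi; omega
      rw [zero_pow hi', mul_zero]
    rw [hval]
    exact pow_ne_zero _ hxg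
  · -- G-invariance
    intro A hA
    obtain ⟨l, hl0, hgA, hhA⟩ := exists_scalar hQ A hA
    have hr := rawAct_qtransform A hgA hhA (le_of_lt hQ.deg_lt) (le_of_eq hdeg)
    rw [polyAct, hdeg, hr, leadingCoeff_mul, leadingCoeff_C, hmon.leadingCoeff, mul_one,
      mul_comm (C (l ^ F.natDegree)) _, mul_assoc, ← C_mul,
      mul_inv_cancel₀ (pow_ne_zero _ hl0), C_1, mul_one]
end

section
/- Let K be a field, G a finite subgroup of PGL₂(K) with quotient map Q_G, F ∈ K[x] monic irreducible, and r a monic irreducible factor of F^{Q_G} with root v in the algebraic closure. Then Q_G(v) is a root of F and deg(F) divides deg(r); in fact deg(r) = [K(v):K(Q_G(v))] · deg(F). -/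
open Polynomial

attribute [local instance] Classical.propDecidable

open IntermediateField in
theorem factor_root_and_degree {K : Type*} [Field K] (G : Subgroup (PGL2 K))
    (hGfin : (G : Set (PGL2 K)).Finite) (g h : Polynomial K) (hQ : IsQuotientMap G g h)
    (F : Polynomial K) (hF : F.Monic) (hFirr : Irreducible F)
    (r : Polynomial K) (hr : r.Monic) (hrirr : Irreducible r)
    (hrdvd : r ∣ Qtransform g h F)
    (v : AlgebraicClosure K) (hv : Polynomial.aeval v r = 0) :
    Polynomial.aeval v h ≠ 0 ∧
    Polynomial.aeval (Polynomial.aeval v g / Polynomial.aeval v h) F = 0 ∧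
    F.natDegree ∣ r.natDegree ∧
    r.natDegree =
      (minpoly (↥K⟮Polynomial.aeval v g / Polynomial.aeval v h⟯) v).natDegree *
        F.natDegree := by

  classical
  have hFdeg : 0 < F.natDegree := hFirr.natDegree_pos
  set gv := Polynomial.aeval v g with hgv
  set hv' := Polynomial.aeval v h with hhvdef
  have hQ0 : Polynomial.aeval v (Qtransform g h F) = 0 := by
    obtain ⟨s, hs⟩ := hrdvd
    rw [hs, map_mul, hv, zero_mul]
  have hQsum : Polynomial.aeval v (Qtransform g h F)
      = ∑ i ∈ Finset.range (F.natDegree + 1),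
        algebraMap K (AlgebraicClosure K) (F.coeff i) * gv ^ i * hv' ^ (F.natDegree - i) := by
    simp [Qtransform, map_sum, map_mul, map_pow, Polynomial.aeval_C, hgv, hhvdef]
  have hhv : hv' ≠ 0 := by
    intro h0
    rw [hQsum, h0] at hQ0
    rw [Finset.sum_eq_single F.natDegree (fun i hi hne => by
        have hlt : i < F.natDegree := by
          have := Finset.mem_range.mp hi; omega
        rw [zero_pow (by omega : F.natDegree - i ≠ 0), mul_zero])
      (fun hn => absurd (Finset.self_mem_range_succ _) hn)] at hQ0
    rw [Nat.sub_self, pow_zero, mul_one, hF.coeff_natDegree, map_one, one_mul] at hQ0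
    have hg0 : gv = 0 := pow_eq_zero_iff (by omega) |>.mp hQ0
    obtain ⟨a, b, hab⟩ := hQ.coprime
    have := congrArg (Polynomial.aeval v) hab
    simp only [map_add, map_mul, map_one, ← hgv, ← hhvdef, hg0, h0, mul_zero, add_zero,
      zero_add] at this
    exact zero_ne_one this
  refine ⟨hhv, ?_⟩
  have hFw : Polynomial.aeval (gv / hv') F = 0 := by
    have hkey : hv' ^ F.natDegree * Polynomial.aeval (gv / hv') F = 0 := by
      rw [Polynomial.aeval_eq_sum_range, Finset.mul_sum, ← hQ0, hQsum]
      refine Finset.sum_congr rfl fun i hi => ?_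
      have hle : i ≤ F.natDegree := by
        have := Finset.mem_range.mp hi; omega
      have hsplit : hv' ^ F.natDegree = hv' ^ i * hv' ^ (F.natDegree - i) := by
        rw [← pow_add]; congr 1; omega
      rw [Algebra.smul_def, div_pow, hsplit]
      field_simp
    exact (mul_eq_zero.mp hkey).resolve_left (pow_ne_zero _ hhv)
  refine ⟨hFw, ?_⟩
  set w := gv / hv' with hwdef
  have hvint : IsIntegral K v := ⟨r, hr, by rwa [← Polynomial.aeval_def]⟩
  have hwint : IsIntegral K w := ⟨F, hF, by rwa [← Polynomial.aeval_def]⟩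
  have hrmin : minpoly K v = r := (minpoly.eq_of_irreducible_of_monic hrirr hv hr).symm
  have hFmin : minpoly K w = F := (minpoly.eq_of_irreducible_of_monic hFirr hFw hF).symm
  -- w ∈ K⟮v⟯
  have hvmem : v ∈ K⟮v⟯ := IntermediateField.mem_adjoin_simple_self K v
  have hgvmem : gv ∈ K⟮v⟯ :=
    IntermediateField.algebra_adjoin_le_adjoin K {v}
      (Polynomial.aeval_mem_adjoin_singleton K v)
  have hhvmem : hv' ∈ K⟮v⟯ :=
    IntermediateField.algebra_adjoin_le_adjoin K {v}
      (Polynomial.aeval_mem_adjoin_singleton K v)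
  have hwmem : w ∈ K⟮v⟯ := K⟮v⟯.div_mem hgvmem hhvmem
  -- tower
  have hvintE : IsIntegral (↥K⟮w⟯) v := hvint.tower_top
  haveI : FiniteDimensional K K⟮w⟯ := IntermediateField.adjoin.finiteDimensional hwint
  haveI : FiniteDimensional (↥K⟮w⟯) (↥K⟮w⟯⟮v⟯) :=
    IntermediateField.adjoin.finiteDimensional hvintE
  have hEq : IntermediateField.restrictScalars K (K⟮w⟯⟮v⟯) = K⟮v⟯ := by
    rw [IntermediateField.adjoin_simple_adjoin_simple]
    apply le_antisymm
    · rw [IntermediateField.adjoin_le_iff]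
      rintro x hx
      rcases hx with hx | hx
      · exact hx ▸ hwmem
      · exact hx ▸ hvmem
    · rw [IntermediateField.adjoin_le_iff]
      rintro x hx
      exact hx ▸ IntermediateField.subset_adjoin K {w, v} (Set.mem_insert_of_mem _ rfl)
  have hfr1 : Module.finrank K K⟮v⟯ = r.natDegree := by
    rw [IntermediateField.adjoin.finrank hvint, hrmin]
  have hfr2 : Module.finrank K K⟮w⟯ = F.natDegree := by
    rw [IntermediateField.adjoin.finrank hwint, hFmin]
  have hfr3 : Module.finrank (↥K⟮w⟯) (↥K⟮w⟯⟮v⟯) = (minpoly (↥K⟮w⟯) v).natDegree :=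
    IntermediateField.adjoin.finrank hvintE
  have htower : Module.finrank K (↥K⟮w⟯) * Module.finrank (↥K⟮w⟯) (↥K⟮w⟯⟮v⟯)
      = Module.finrank K (↥K⟮w⟯⟮v⟯) := Module.finrank_mul_finrank K (↥K⟮w⟯) (↥K⟮w⟯⟮v⟯)
  have hsame : Module.finrank K (↥K⟮w⟯⟮v⟯) = Module.finrank K K⟮v⟯ := by
    rw [← hEq]; rfl
  have hdeg : r.natDegree = (minpoly (↥K⟮w⟯) v).natDegree * F.natDegree := by
    rw [← hfr1, ← hsame, ← htower, ← hfr3, ← hfr2]; ring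
  exact ⟨⟨(minpoly (↥K⟮w⟯) v).natDegree, by rw [hdeg, mul_comm]⟩, hdeg⟩
end

section
/- Let K be a field of characteristic p > 0, q a power of p, and s ∈ K[x] monic, irreducible and separable. Then there exist a monic irreducible separable polynomial f ∈ K[x] with deg f = deg s and natural numbers a, b with a + b = d (where q = p^d) such that s(x^q) = (f(x^{p^a}))^{p^b} and f(x^{p^a}) is irreducible over K. -/
open Polynomial

section Aux

variable {K : Type*} [Field K]

private theorem expand_contract_aux {p : ℕ} (hp : p ≠ 0) {h : K[X]}
    (hv : ∀ n, ¬ p ∣ n → h.coeff n = 0) : expand K p (contract p h) = h := by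
  ext n
  rw [coeff_expand hp.bot_lt, coeff_contract hp]
  split_ifs with hd
  · rw [Nat.div_mul_cancel hd]
  · exact (hv n hd).symm

/-- Key dichotomy: for `g` monic irreducible over a field of characteristic `p`,
either `expand K p g` is irreducible, or it is the `p`-th power of a monic
irreducible polynomial `h` with `map (frobenius K p) h = g`. -/
private theorem expand_dichotomy (p : ℕ) (hp : p.Prime) [Fact p.Prime] [CharP K p]
    {g : K[X]} (hm : g.Monic) (hi : Irreducible g) :
    Irreducible (expand K p g) ∨
      ∃ h : K[X], h.Monic ∧ Irreducible h ∧ expand K p g = h ^ p ∧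
        map (frobenius K p) h = g := by
  have hp0 : 0 < p := hp.pos
  have hEmonic : (expand K p g).Monic := hm.expand hp0
  have hEdegpos : 0 < (expand K p g).natDegree := by
    rw [natDegree_expand]
    exact Nat.mul_pos hi.natDegree_pos hp0
  have hEnu : ¬ IsUnit (expand K p g) := not_isUnit_of_natDegree_pos _ hEdegpos
  obtain ⟨h, hhm, hhi, hdvd⟩ := (expand K p g).exists_monic_irreducible_factor hEnu
  have hfrobinj : Function.Injective (frobenius K p) := (frobenius K p).injective
  -- map frob h divides g ^ p
  have h1 : map (frobenius K p) h ∣ g ^ p := by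
    rw [← map_frobenius_expand]
    exact Polynomial.map_dvd _ hdvd
  have hgprime : Prime g := hi.prime
  obtain ⟨j, hj, hassoc⟩ := (dvd_prime_pow hgprime p).mp h1
  have heq : map (frobenius K p) h = g ^ j :=
    eq_of_monic_of_associated (hhm.map _) (hm.pow _) hassoc
  have hj0 : j ≠ 0 := by
    rintro rfl
    have := congrArg natDegree heq
    rw [natDegree_map_eq_of_injective hfrobinj, pow_zero, natDegree_one] at this
    exact hhi.natDegree_pos.ne' this
  have hgd : g ∣ map (frobenius K p) h := heq ▸ dvd_pow_self g hj0
  have h2 : expand K p g ∣ h ^ p := by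
    have := _root_.map_dvd (expand K p) hgd
    rwa [← map_expand, map_frobenius_expand] at this
  have hhprime : Prime h := hhi.prime
  obtain ⟨k, hk, hassoc2⟩ := (dvd_prime_pow hhprime p).mp h2
  have heq2 : expand K p g = h ^ k :=
    eq_of_monic_of_associated hEmonic (hhm.pow _) hassoc2
  have hk0 : k ≠ 0 := by
    rintro rfl
    rw [pow_zero] at heq2
    exact hEnu (heq2 ▸ isUnit_one)
  rcases eq_or_lt_of_le hk with rfl | hklt
  · right
    refine ⟨h, hhm, hhi, heq2, ?_⟩
    refine expand_injective hp0 (R := K) ?_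
    rw [← map_expand, map_frobenius_expand, ← heq2]
  · rcases eq_or_lt_of_le (Nat.one_le_iff_ne_zero.mpr hk0) with rfl | h1k
    · left
      rw [heq2, pow_one]
      exact hhi
    · exfalso
      have hder : Polynomial.derivative (expand K p g) = 0 := by
        rw [derivative_expand]
        have hpz : (p : K[X]) = 0 := CharP.cast_eq_zero K[X] p
        rw [hpz, zero_mul, mul_zero]
      rw [heq2, derivative_pow] at hder
      have hkK : (k : K[X]) ≠ 0 := by
        rw [Ne, CharP.cast_eq_zero_iff K[X] p]
        exact Nat.not_dvd_of_pos_of_lt (Nat.pos_of_ne_zero hk0) hklt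
      have hh0 : h ^ (k - 1) ≠ 0 := pow_ne_zero _ hhi.ne_zero
      have hdh : Polynomial.derivative h = 0 := by
        rcases mul_eq_zero.mp hder with h' | h'
        · rcases mul_eq_zero.mp h' with h'' | h''
          · exact absurd (by simpa using h'') hkK
          · exact absurd h'' hh0
        · exact h'
      have hexp : expand K p (contract p h) = h := expand_contract p hdh hp.ne_zero
      have hgk : g = contract p h ^ k := by
        refine expand_injective hp0 (R := K) ?_
        rw [map_pow, hexp, heq2]
      have hcu : ¬ IsUnit (contract p h) := by
        intro hu
        exact hi.not_isUnit (hgk ▸ hu.pow k)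
      obtain ⟨k, rfl⟩ : ∃ k', k = k' + 2 := ⟨k - 2, by omega⟩
      rw [pow_succ] at hgk
      rcases hi.isUnit_or_isUnit hgk with hu | hu
      · exact hcu ((isUnit_pow_iff (Nat.succ_ne_zero k)).mp hu)
      · exact hcu hu

private theorem main_aux (p : ℕ) (hp : p.Prime) [CharP K p]
    (s : K[X]) (hs : s.Monic) (hsirr : Irreducible s) (hssep : s.Separable) (d : ℕ) :
    ∃ (f : K[X]) (a b : ℕ), f.Monic ∧ Irreducible f ∧ f.Separable ∧
      f.natDegree = s.natDegree ∧ a + b = d ∧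
      expand K (p ^ d) s = (expand K (p ^ a) f) ^ p ^ b ∧
      Irreducible (expand K (p ^ a) f) := by
  haveI : Fact p.Prime := ⟨hp⟩
  induction d with
  | zero =>
    exact ⟨s, 0, 0, hs, hsirr, hssep, rfl, rfl,
      by simp [pow_zero, expand_one], by simpa [pow_zero, expand_one] using hsirr⟩
  | succ d ih =>
    obtain ⟨f, a, b, hfm, hfi, hfs, hfd, hab, heq, hirr⟩ := ih
    have hgm : (expand K (p ^ a) f).Monic := hfm.expand (pow_pos hp.pos a)
    have key : expand K (p ^ (d + 1)) s = expand K p (expand K (p ^ d) s) := by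
      rw [expand_expand, ← pow_succ']
    rcases expand_dichotomy p hp hgm hirr with hcase | ⟨h, hhm, hhi, hEq, hmap⟩
    · refine ⟨f, a + 1, b, hfm, hfi, hfs, hfd, by omega, ?_, ?_⟩
      · calc expand K (p ^ (d + 1)) s = expand K p (expand K (p ^ d) s) := key
          _ = (expand K p (expand K (p ^ a) f)) ^ p ^ b := by rw [heq, map_pow]
          _ = (expand K (p ^ (a + 1)) f) ^ p ^ b := by rw [expand_expand, ← pow_succ']
      · have : expand K (p ^ (a + 1)) f = expand K p (expand K (p ^ a) f) := by
          rw [expand_expand, ← pow_succ']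
        rw [this]
        exact hcase
    · -- second case: expand K p (expand K (p^a) f) = h ^ p, map frob h = expand K (p^a) f
      have hpa : (p : ℕ) ^ a ≠ 0 := (pow_pos hp.pos a).ne'
      have hv : ∀ n, ¬ p ^ a ∣ n → h.coeff n = 0 := by
        intro n hn
        have hc : frobenius K p (h.coeff n) = 0 := by
          have := congrArg (fun q => Polynomial.coeff q n) hmap
          simp only [coeff_map] at this
          rw [this, coeff_expand (pow_pos hp.pos a), if_neg hn]
        rw [frobenius_def] at hc
        exact pow_eq_zero_iff hp.ne_zero |>.mp hc
      have hexp : expand K (p ^ a) (contract (p ^ a) h) = h := expand_contract_aux hpa hv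
      set f' := contract (p ^ a) h with hf'def
      have hmapf : map (frobenius K p) f' = f := by
        rw [hf'def, map_contract hpa, hmap, contract_expand _ hpa]
      have hf'm : f'.Monic := (monic_expand_iff (pow_pos hp.pos a)).mp (hexp ▸ hhm)
      have hf'i : Irreducible f' := of_irreducible_expand_pow hp.ne_zero (hexp ▸ hhi)
      have hf's : f'.Separable := by
        rw [← separable_map (frobenius K p), hmapf]
        exact hfs
      have hf'd : f'.natDegree = s.natDegree := by
        rw [← hfd, ← hmapf, natDegree_map_eq_of_injective (frobenius K p).injective]
      refine ⟨f', a, b + 1, hf'm, hf'i, hf's, hf'd, by omega, ?_, hexp ▸ hhi⟩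
      calc expand K (p ^ (d + 1)) s = expand K p (expand K (p ^ d) s) := key
        _ = (expand K p (expand K (p ^ a) f)) ^ p ^ b := by rw [heq, map_pow]
        _ = (h ^ p) ^ p ^ b := by rw [hEq]
        _ = h ^ p ^ (b + 1) := by rw [← pow_mul, ← pow_succ']
        _ = (expand K (p ^ a) f') ^ p ^ (b + 1) := by rw [hexp]

end Aux

/-- In characteristic `p > 0`, for `s` monic irreducible separable and `q = p^d`,
`s(x^q)` is the `p^b`-th power of an irreducible polynomial `f(x^{p^a})`
with `f` monic irreducible separable of the same degree as `s` and `a + b = d`. -/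
theorem comp_frobenius_power_factorization {K : Type*} [Field K]
    (p : ℕ) (hp : p.Prime) [CharP K p] (d : ℕ) (hd : 0 < d)
    (s : Polynomial K) (hs : s.Monic) (hsirr : Irreducible s) (hssep : s.Separable) :
    ∃ (f : Polynomial K) (a b : ℕ), f.Monic ∧ Irreducible f ∧ f.Separable ∧
      f.natDegree = s.natDegree ∧ a + b = d ∧
      s.comp (X ^ p ^ d) = (f.comp (X ^ p ^ a)) ^ p ^ b ∧
      Irreducible (f.comp (X ^ p ^ a)) := by
  obtain ⟨f, a, b, h1, h2, h3, h4, h5, h6, h7⟩ := main_aux p hp s hs hsirr hssep d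
  exact ⟨f, a, b, h1, h2, h3, h4, h5,
    by rw [← expand_eq_comp_X_pow, ← expand_eq_comp_X_pow]; exact h6,
    by rw [← expand_eq_comp_X_pow]; exact h7⟩
end

section
/- Let K be a field of characteristic p > 0, G a finite subgroup of PGL₂(K) with quotient map Q_G, and F ∈ K[x] monic irreducible with F(x) = H(x^q) for q a power of p and H monic, irreducible, and separable. Suppose some root v of F^{Q_G} has regular G-orbit (|G∘v| = |G|). Then there exists a separable polynomial S ∈ K[x] with F^{Q_G}(x) = S(x^q). -/
open Polynomial

attribute [local instance] Classical.propDecidable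

/-! ### Auxiliary lemmas on the homogenized transform -/

noncomputable section QTsec
variable {L : Type*} [Field L]

/-- generalized Q-transform with explicit degree bound -/
def QT (g h : Polynomial L) (n : ℕ) (P : Polynomial L) : Polynomial L :=
  ∑ i ∈ Finset.range (n + 1), C (P.coeff i) * g ^ i * h ^ (n - i)

lemma QT_map {K : Type*} [Field K] (ι : K →+* L) (g h : Polynomial K) (n : ℕ) (P : Polynomial K) :
    (QT g h n P).map ι = QT (g.map ι) (h.map ι) n (P.map ι) := by
  simp [QT, Polynomial.map_sum, Polynomial.map_mul, Polynomial.map_pow, coeff_map]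

lemma QT_one (g h : Polynomial L) : QT g h 0 1 = 1 := by
  simp [QT]

lemma QT_linear (g h : Polynomial L) (r : L) : QT g h 1 (X - C r) = g - C r * h := by
  simp [QT, Finset.sum_range_succ, coeff_sub]
  ring

lemma QT_frac (g h : Polynomial L) (hh : h ≠ 0) {n : ℕ} {P : Polynomial L}
    (hP : P.natDegree ≤ n) :
    algebraMap (Polynomial L) (FractionRing (Polynomial L)) (QT g h n P) =
      algebraMap _ _ h ^ n *
        eval₂ ((algebraMap (Polynomial L) (FractionRing (Polynomial L))).comp
          (C : L →+* Polynomial L))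
          (algebraMap _ _ g / algebraMap _ _ h) P := by
  set η := algebraMap (Polynomial L) (FractionRing (Polynomial L)) with hη
  have hηh : η h ≠ 0 := (map_ne_zero_iff η (IsFractionRing.injective _ _)).mpr hh
  rw [eval₂_eq_sum_range' _ (lt_of_le_of_lt hP (Nat.lt_succ_self n))]
  rw [QT, map_sum, Finset.mul_sum]
  refine Finset.sum_congr rfl fun i hi => ?_
  have hin : i ≤ n := Nat.lt_succ_iff.mp (Finset.mem_range.mp hi)
  rw [map_mul, map_mul, map_pow, map_pow]
  rw [div_pow]
  field_simp
  rw [mul_assoc, ← pow_add, Nat.sub_add_cancel hin]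
  rw [RingHom.comp_apply]
  ring

lemma QT_mul (g h : Polynomial L) (hh : h ≠ 0) {n₁ n₂ : ℕ} {P₁ P₂ : Polynomial L}
    (h₁ : P₁.natDegree ≤ n₁) (h₂ : P₂.natDegree ≤ n₂) :
    QT g h (n₁ + n₂) (P₁ * P₂) = QT g h n₁ P₁ * QT g h n₂ P₂ := by
  apply IsFractionRing.injective (Polynomial L) (FractionRing (Polynomial L))
  have h12 : (P₁ * P₂).natDegree ≤ n₁ + n₂ := natDegree_mul_le.trans (add_le_add h₁ h₂)
  rw [map_mul, QT_frac g h hh h12, QT_frac g h hh h₁, QT_frac g h hh h₂, eval₂_mul, pow_add]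
  ring

lemma QT_pow (g h : Polynomial L) (hh : h ≠ 0) (r : L) (k : ℕ) :
    QT g h k ((X - C r) ^ k) = (g - C r * h) ^ k := by
  induction k with
  | zero => simpa using QT_one g h
  | succ k ih =>
      have : QT g h (k + 1) ((X - C r) ^ (k+1)) = QT g h k ((X - C r)^k) * QT g h 1 (X - C r) := by
        rw [← QT_mul g h hh (by simp [natDegree_pow]) (by simp), pow_succ]
      rw [this, ih, QT_linear, pow_succ]

lemma QT_prod (g h : Polynomial L) (hh : h ≠ 0) {ι : Type*} (s : Finset ι)
    (P : ι → Polynomial L) (nn : ι → ℕ) (hd : ∀ z ∈ s, (P z).natDegree ≤ nn z) :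
    QT g h (∑ z ∈ s, nn z) (∏ z ∈ s, P z) = ∏ z ∈ s, QT g h (nn z) (P z) := by
  classical
  induction s using Finset.cons_induction with
  | empty => simpa using QT_one g h
  | cons a s ha ih =>
      rw [Finset.sum_cons, Finset.prod_cons, Finset.prod_cons,
        QT_mul g h hh (hd a (Finset.mem_cons_self a s))
          ((Polynomial.natDegree_prod_le s P).trans
            (Finset.sum_le_sum fun z hz => hd z (Finset.mem_cons_of_mem hz))),
        ih fun z hz => hd z (Finset.mem_cons_of_mem hz)]

end QTsec

open scoped IntermediateField in
set_option maxHeartbeats 2000000 in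
theorem exists_separable_S {K : Type*} [Field K] (p : ℕ) (hp : p.Prime) [CharP K p]
    (G : Subgroup (PGL2 K)) (hGfin : (G : Set (PGL2 K)).Finite)
    (g h : Polynomial K) (hQ : IsQuotientMap G g h)
    (q d : ℕ) (hq : q = p ^ d) (H F : Polynomial K)
    (hH : H.Monic) (hHirr : Irreducible H) (hHsep : H.Separable)
    (hFH : F = H.comp (Polynomial.X ^ q)) (hF : F.Monic) (hFirr : Irreducible F)
    (v : AlgebraicClosure K) (hv : v ∈ rootSetAC (Qtransform g h F))
    (hreg : (mobOrbit G (some v)).ncard = Nat.card G) :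
    ∃ S : Polynomial K, S.Separable ∧ Qtransform g h F = S.comp (Polynomial.X ^ q) := by
  classical
  haveI : Fact p.Prime := ⟨hp⟩
  haveI : ExpChar K p := ExpChar.prime hp
  set ι : K →+* (AlgebraicClosure K) := algebraMap K (AlgebraicClosure K) with hι
  have hιinj : Function.Injective ι := ι.injective
  have hq0 : 0 < q := hq ▸ pow_pos hp.pos d
  set n := g.natDegree with hn
  set m := H.natDegree with hm
  have hFe : F = Polynomial.expand K q H := by
    rw [hFH, Polynomial.expand_eq_comp_X_pow]
  have hN : F.natDegree = m * q := by rw [hFe, Polynomial.natDegree_expand]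
  -- the candidate S
  set φd : K →+* K := (frobenius K p) ^ d with hφd
  set S : Polynomial K := ∑ j ∈ Finset.range (m + 1),
      C (H.coeff j) * (g.map φd) ^ j * (h.map φd) ^ (m - j) with hS
  have hexpand_map : ∀ P : Polynomial K, Polynomial.expand K q (P.map φd) = P ^ q := by
    intro P
    rw [← Polynomial.map_expand, hq, show φd = iterateFrobenius K p d from
      RingHom.ext fun x => by rw [hφd, RingHom.coe_pow, iterate_frobenius, iterateFrobenius_def],
      Polynomial.map_iterateFrobenius_expand]
  -- Key identity over K : Qtransform g h F = expand q S
  have hQtS : Qtransform g h F = Polynomial.expand K q S := by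
    have hrhs : Polynomial.expand K q S = ∑ j ∈ Finset.range (m + 1),
        C (H.coeff j) * g ^ (j * q) * h ^ ((m - j) * q) := by
      rw [hS, map_sum]
      refine Finset.sum_congr rfl fun j hj => ?_
      rw [map_mul, map_mul, map_pow, map_pow, Polynomial.expand_C, hexpand_map, hexpand_map,
        ← pow_mul, ← pow_mul, mul_comm q j, mul_comm q (m - j)]
    rw [hrhs]
    have hQt : Qtransform g h F = ∑ i ∈ Finset.range (F.natDegree + 1),
        C (F.coeff i) * g ^ i * h ^ (F.natDegree - i) := rfl
    rw [hQt]
    have hsub : ((Finset.range (m + 1)).image fun j => j * q) ⊆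
        Finset.range (F.natDegree + 1) := by
      intro i hi
      obtain ⟨j, hj, rfl⟩ := Finset.mem_image.mp hi
      have hj' : j ≤ m := Nat.lt_succ_iff.mp (Finset.mem_range.mp hj)
      refine Finset.mem_range.mpr ?_
      rw [hN]
      exact Nat.lt_succ_of_le (Nat.mul_le_mul_right q hj')
    rw [← Finset.sum_subset hsub ?van]
    case van =>
      intro i hi hni
      have : F.coeff i = 0 := by
        rw [hFe, Polynomial.coeff_expand hq0]
        rw [if_neg]
        intro hdvd
        obtain ⟨j, rfl⟩ := hdvd
        apply hni
        refine Finset.mem_image.mpr ⟨j, Finset.mem_range.mpr (Nat.lt_succ_of_le ?_), (mul_comm q j).symm⟩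
        have h6 := Nat.lt_succ_iff.mp (Finset.mem_range.mp hi)
        rw [hN, mul_comm m q] at h6
        exact Nat.le_of_mul_le_mul_left h6 hq0
      simp [this]
    rw [Finset.sum_image (by intro a _ b _ hab; exact Nat.eq_of_mul_eq_mul_right hq0 hab)]
    refine Finset.sum_congr rfl fun j hj => ?_
    have hj' : j ≤ m := Nat.lt_succ_iff.mp (Finset.mem_range.mp hj)
    have hc : F.coeff (j * q) = H.coeff j := by
      rw [hFe, Polynomial.coeff_expand hq0, if_pos ⟨j, mul_comm q j ▸ rfl⟩,
        Nat.mul_div_cancel j hq0]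
    rw [hc, hN, ← tsub_mul]
  -- pass to the algebraic closure
  haveI : CharP (AlgebraicClosure K) p := charP_of_injective_algebraMap hιinj p
  set Gbar := g.map ι with hGbar
  set hbar := h.map ι with hhbar
  set Hbar := H.map ι with hHbar
  have hhbar0 : hbar ≠ 0 := Polynomial.map_ne_zero hQ.h_ne
  have hGbar0 : Gbar ≠ 0 := Polynomial.map_ne_zero hQ.monic_g.ne_zero
  have hndeg : Gbar.natDegree = n := Polynomial.natDegree_map_eq_of_injective hιinj g
  have hhdeg : hbar.natDegree < n := by
    rw [Polynomial.natDegree_map_eq_of_injective hιinj h]; exact hQ.deg_lt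
  -- q-th roots in (AlgebraicClosure K)
  have hqinj : ∀ x y : (AlgebraicClosure K), x ^ q = y ^ q → x = y := by
    intro x y hxy
    have h0 : (x - y) ^ q = 0 := by
      rw [hq] at hxy ⊢
      rw [sub_pow_char_pow, hxy, sub_self]
    have := pow_eq_zero_iff (n := q) hq0.ne' |>.mp h0
    exact sub_eq_zero.mp this
  set u : (AlgebraicClosure K) → (AlgebraicClosure K) := fun z => Classical.choose (IsAlgClosed.exists_pow_nat_eq z hq0) with hu
  have hupow : ∀ z : (AlgebraicClosure K), (u z) ^ q = z := fun z =>
    Classical.choose_spec (IsAlgClosed.exists_pow_nat_eq z hq0)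
  have huinj : Function.Injective u := by
    intro a b hab
    rw [← hupow a, ← hupow b, hab]
  -- roots of H in (AlgebraicClosure K)
  set T : Finset (AlgebraicClosure K) := Hbar.roots.toFinset with hT
  have hHnodup : Hbar.roots.Nodup := Polynomial.nodup_roots (hHsep.map)
  have hHsplit : Hbar = ∏ z ∈ T, (X - C z) := by
    have h1 : Hbar = (Multiset.map (fun a => X - C a) Hbar.roots).prod :=
      (IsAlgClosed.splits Hbar).eq_prod_roots_of_monic (hH.map ι)
    rw [h1, Finset.prod]
    congr 1
    rw [hT, Multiset.toFinset_val, Multiset.dedup_eq_self.mpr hHnodup]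
  have hTcard : T.card = m := by
    rw [hT, Multiset.toFinset_card_eq_card_iff_nodup.mpr hHnodup,
      Polynomial.splits_iff_card_roots.mp (IsAlgClosed.splits Hbar), hHbar,
      Polynomial.natDegree_map_eq_of_injective hιinj]
  -- factorization of F over (AlgebraicClosure K)
  have hlinpow : ∀ y : AlgebraicClosure K,
      ((X : Polynomial (AlgebraicClosure K)) - C y) ^ q = X ^ q - C (y ^ q) := by
    intro y
    rw [hq, sub_pow_char_pow, map_pow]
  have hFbar : F.map ι = ∏ z ∈ T, (X - C (u z)) ^ q := by
    rw [hFe, Polynomial.map_expand, hHbar.symm, hHsplit, map_prod]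
    refine Finset.prod_congr rfl fun z hz => ?_
    rw [map_sub, Polynomial.expand_X, Polynomial.expand_C, hlinpow, hupow]
  -- factorization of the Q-transform over (AlgebraicClosure K)
  set Φ : (AlgebraicClosure K) → Polynomial (AlgebraicClosure K) := fun z => Gbar - C (u z) * hbar with hΦ
  have hFQbar : (Qtransform g h F).map ι = ∏ z ∈ T, (Φ z) ^ q := by
    have h1 : Qtransform g h F = QT g h F.natDegree F := rfl
    rw [h1, QT_map, hFbar, ← hGbar, ← hhbar]
    have hNsum : F.natDegree = ∑ _z ∈ T, q := by
      rw [Finset.sum_const, smul_eq_mul, hTcard, hN]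
    rw [hNsum, QT_prod _ _ hhbar0 T _ (fun _ => q) (fun z hz => by
        rw [Polynomial.natDegree_pow, Polynomial.natDegree_X_sub_C, mul_one])]
    exact Finset.prod_congr rfl fun z hz => QT_pow _ _ hhbar0 (u z) q
  -- basic facts about the factors Φ z
  have hΦdeg : ∀ z : (AlgebraicClosure K), (Φ z).natDegree = n := by
    intro z
    rw [hΦ]
    have : (C (u z) * hbar).natDegree < Gbar.natDegree := by
      refine lt_of_le_of_lt (Polynomial.natDegree_C_mul_le _ _) ?_
      rw [hndeg]; exact hhdeg
    rw [Polynomial.natDegree_sub_eq_left_of_natDegree_lt this, hndeg]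
  have hΦmonic : ∀ z : (AlgebraicClosure K), (Φ z).Monic := by
    intro z
    refine Polynomial.monic_of_natDegree_le_of_coeff_eq_one n (le_of_eq (hΦdeg z)) ?_
    have h2 : (C (u z) * hbar).coeff n = 0 := by
      refine Polynomial.coeff_eq_zero_of_natDegree_lt ?_
      exact lt_of_le_of_lt (Polynomial.natDegree_C_mul_le _ _) hhdeg
    rw [hΦ]
    simp only [Polynomial.coeff_sub, h2, sub_zero]
    have h3 := (hQ.monic_g.map ι).coeff_natDegree
    rwa [hndeg] at h3
  have hΦ0 : ∀ z : (AlgebraicClosure K), Φ z ≠ 0 := fun z => (hΦmonic z).ne_zero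
  -- coprimality in (AlgebraicClosure K)
  have hcop : ∀ x : (AlgebraicClosure K), hbar.eval x = 0 → Gbar.eval x = 0 → False := by
    intro x hx1 hx2
    obtain ⟨a, b, hab⟩ := hQ.coprime
    have := congrArg (fun P => Polynomial.eval x (P.map ι)) hab
    simp only [Polynomial.map_add, Polynomial.map_mul, Polynomial.map_one, Polynomial.eval_add,
      Polynomial.eval_mul, Polynomial.eval_one, ← hGbar, ← hhbar, hx1, hx2] at this
    simp at this
  have hrootH : ∀ (z : (AlgebraicClosure K)) (x : (AlgebraicClosure K)), (Φ z).eval x = 0 → hbar.eval x ≠ 0 := by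
    intro z x hx hh0
    have : Gbar.eval x = 0 := by
      have := hx
      rw [hΦ] at this
      simp only [Polynomial.eval_sub, Polynomial.eval_mul, Polynomial.eval_C, hh0,
        mul_zero, sub_zero] at this
      exact this
    exact hcop x hh0 this
  -- root finsets of each factor
  set R : (AlgebraicClosure K) → Finset (AlgebraicClosure K) := fun z => (Φ z).roots.toFinset with hR
  have hmemR : ∀ z x, x ∈ R z ↔ (Φ z).eval x = 0 := by
    intro z x
    rw [hR]
    simp only [Multiset.mem_toFinset]
    rw [Polynomial.mem_roots (hΦ0 z)]
    simp [Polynomial.IsRoot]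
  have hRcard_le : ∀ z : (AlgebraicClosure K), (R z).card ≤ n := by
    intro z
    refine le_trans (Multiset.toFinset_card_le _) ?_
    have := Polynomial.card_roots' (Φ z)
    rwa [hΦdeg z] at this
  -- the root v of the Q-transform lies in some factor
  have hvroot : Polynomial.eval v ((Qtransform g h F).map ι) = 0 := by
    have : Polynomial.aeval v (Qtransform g h F) = 0 := hv
    rwa [Polynomial.aeval_def, ← Polynomial.eval_map] at this
  obtain ⟨z₀, hz₀T, hvz₀⟩ : ∃ z₀ ∈ T, (Φ z₀).eval v = 0 := by
    rw [hFQbar, Polynomial.eval_prod] at hvroot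
    obtain ⟨z₀, hz₀, h0⟩ := Finset.prod_eq_zero_iff.mp hvroot
    rw [Polynomial.eval_pow] at h0
    exact ⟨z₀, hz₀, pow_eq_zero_iff hq0.ne' |>.mp h0⟩
  have hhv : hbar.eval v ≠ 0 := hrootH z₀ v hvz₀
  have hGv : Gbar.eval v = u z₀ * hbar.eval v := by
    have h5 := hvz₀
    rw [hΦ] at h5
    simp only [Polynomial.eval_sub, Polynomial.eval_mul, Polynomial.eval_C] at h5
    exact sub_eq_zero.mp h5
  -- evaluation of rawAct over (AlgebraicClosure K)
  have rawEval : ∀ (A : Matrix.GeneralLinearGroup (Fin 2) K) (P : Polynomial K) (y : (AlgebraicClosure K)),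
      Polynomial.eval y ((rawAct A n P).map ι) =
        ∑ i ∈ Finset.range (n + 1), ι (P.coeff i) * (ι (ent A 0 0) * y + ι (ent A 0 1)) ^ i *
          (ι (ent A 1 0) * y + ι (ent A 1 1)) ^ (n - i) := by
    intro A P y
    simp [rawAct, Polynomial.map_sum, Polynomial.map_mul, Polynomial.map_pow,
      Polynomial.map_add, Polynomial.eval_finset_sum]
  have hinvEval : ∀ (A : Matrix.GeneralLinearGroup (Fin 2) K),
      (QuotientGroup.mk A : PGL2 K) ∈ G → ∀ y : (AlgebraicClosure K),
      Polynomial.eval y ((rawAct A n g).map ι) * hbar.eval y =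
        Polynomial.eval y ((rawAct A n h).map ι) * Gbar.eval y := by
    intro A hA y
    have := congrArg (fun P => Polynomial.eval y (P.map ι)) (hQ.invariant A hA)
    simpa [Polynomial.map_mul, ← hGbar, ← hhbar] using this
  -- the orbit of v consists of roots of Φ z₀
  have horbit : mobOrbit G (some v) ⊆ Option.some '' (↑(R z₀) : Set (AlgebraicClosure K)) := by
    rintro w ⟨A, hA, rfl⟩
    set a := ι (ent A 0 0)
    set b := ι (ent A 0 1)
    set c := ι (ent A 1 0)
    set d' := ι (ent A 1 1)
    have hdet : ι ((A : Matrix (Fin 2) (Fin 2) K).det) ≠ 0 := by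
      intro h0
      have : (A : Matrix (Fin 2) (Fin 2) K).det = 0 := hιinj (by simpa using h0)
      have hu : IsUnit (A : Matrix (Fin 2) (Fin 2) K).det :=
        Matrix.isUnit_iff_isUnit_det _ |>.mp ⟨A, rfl⟩
      rw [this] at hu
      exact hu.ne_zero rfl
    have hdet2 : a * d' - b * c ≠ 0 := by
      intro h0
      apply hdet
      rw [Matrix.det_fin_two]
      have : ι (ent A 0 0 * ent A 1 1 - ent A 0 1 * ent A 1 0) = 0 := by
        rw [map_sub, map_mul, map_mul]
        exact h0
      simpa [ent] using this
    by_cases hcd : c * v + d' = 0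
    · -- impossible: ∞ would be in the orbit
      exfalso
      have hab : a * v + b ≠ 0 := by
        intro h0
        apply hdet2
        linear_combination a * hcd - c * h0
      have h1 := hinvEval A hA v
      rw [rawEval, rawEval] at h1
      have hgsum : ∑ i ∈ Finset.range (n + 1), ι (g.coeff i) * (a * v + b) ^ i *
          (c * v + d') ^ (n - i) = (a * v + b) ^ n := by
        rw [Finset.sum_range_succ]
        have hz : ∀ i ∈ Finset.range n, ι (g.coeff i) * (a * v + b) ^ i *
            (c * v + d') ^ (n - i) = 0 := by
          intro i hi
          have : n - i ≠ 0 := Nat.sub_ne_zero_of_lt (Finset.mem_range.mp hi)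
          rw [hcd, zero_pow this, mul_zero]
        rw [Finset.sum_eq_zero hz, zero_add, Nat.sub_self, pow_zero, mul_one,
          hQ.monic_g.coeff_natDegree, map_one, one_mul]
      have hhsum : ∑ i ∈ Finset.range (n + 1), ι (h.coeff i) * (a * v + b) ^ i *
          (c * v + d') ^ (n - i) = 0 := by
        rw [Finset.sum_range_succ]
        have hz : ∀ i ∈ Finset.range n, ι (h.coeff i) * (a * v + b) ^ i *
            (c * v + d') ^ (n - i) = 0 := by
          intro i hi
          have : n - i ≠ 0 := Nat.sub_ne_zero_of_lt (Finset.mem_range.mp hi)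
          rw [hcd, zero_pow this, mul_zero]
        rw [Finset.sum_eq_zero hz, zero_add,
          Polynomial.coeff_eq_zero_of_natDegree_lt hQ.deg_lt, map_zero, zero_mul, zero_mul]
      rw [hgsum, hhsum, zero_mul] at h1
      exact hhv (by
        have := mul_eq_zero.mp h1
        rcases this with h2 | h2
        · exact absurd h2 (pow_ne_zero n hab)
        · exact h2)
    · -- the generic case
      set x := (a * v + b) / (c * v + d') with hx
      have hmob : mob A (some v) = some x := by
        show (if c * v + d' = 0 then none else some ((a * v + b) / (c * v + d'))) = some x
        rw [if_neg hcd]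
      have hxcd : a * v + b = x * (c * v + d') := (div_mul_cancel₀ _ hcd).symm
      have rawEval2 : ∀ P : Polynomial K, P.natDegree ≤ n →
          Polynomial.eval v ((rawAct A n P).map ι) =
            (c * v + d') ^ n * Polynomial.eval x (P.map ι) := by
        intro P hP
        rw [rawEval]
        have hev : Polynomial.eval x (P.map ι) =
            ∑ i ∈ Finset.range (n + 1), ι (P.coeff i) * x ^ i := by
          rw [Polynomial.eval_eq_sum_range' (lt_of_le_of_lt
            Polynomial.natDegree_map_le (Nat.lt_succ_of_le hP))]
          exact Finset.sum_congr rfl fun i _ => by rw [Polynomial.coeff_map]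
        rw [hev, Finset.mul_sum]
        refine Finset.sum_congr rfl fun i hi => ?_
        have hin : i ≤ n := Nat.lt_succ_iff.mp (Finset.mem_range.mp hi)
        rw [hxcd, mul_pow]
        rw [show ι (P.coeff i) * (x ^ i * (c * v + d') ^ i) * (c * v + d') ^ (n - i)
          = (ι (P.coeff i) * x ^ i) * ((c * v + d') ^ i * (c * v + d') ^ (n - i)) by ring,
          ← pow_add, Nat.add_sub_cancel' hin]
        ring
      have h1 := hinvEval A hA v
      rw [rawEval2 g le_rfl, rawEval2 h (le_of_lt hQ.deg_lt)] at h1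
      have hcdn : (c * v + d') ^ n ≠ 0 := pow_ne_zero n hcd
      have h2 : Gbar.eval x * hbar.eval v = hbar.eval x * Gbar.eval v := by
        have := h1
        rw [mul_assoc, mul_assoc] at this
        exact mul_left_cancel₀ hcdn this
      have h3 : Gbar.eval x * hbar.eval v = u z₀ * hbar.eval x * hbar.eval v := by
        rw [h2, hGv]; ring
      have h4 : Gbar.eval x = u z₀ * hbar.eval x := mul_right_cancel₀ hhv h3
      refine ⟨x, ?_, hmob.symm⟩
      rw [Finset.mem_coe, hmemR]
      rw [hΦ]
      simp only [Polynomial.eval_sub, Polynomial.eval_mul, Polynomial.eval_C, h4, sub_self]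
  -- the factor of v has at least n distinct roots
  have hRz₀ : n ≤ (R z₀).card := by
    have h1 := Set.ncard_le_ncard horbit ((R z₀).finite_toSet.image _)
    rw [hreg] at h1
    rw [Set.ncard_image_of_injective _ (Option.some_injective _), Set.ncard_coe_finset] at h1
    rw [hn, hQ.deg_eq]
    exact h1
  -- `u z` is a root of F for z ∈ T
  have haevalF : ∀ z ∈ T, Polynomial.aeval (u z) F = 0 := by
    intro z hz
    rw [Polynomial.aeval_def, ← Polynomial.eval_map, hFbar, Polynomial.eval_prod]
    refine Finset.prod_eq_zero hz ?_
    rw [Polynomial.eval_pow]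
    simp [zero_pow hq0.ne']
  -- Galois conjugation: every factor has at least n distinct roots
  have hRall : ∀ z ∈ T, n ≤ (R z).card := by
    intro z hz
    -- construct a K-embedding of (AlgebraicClosure K) into itself sending u z₀ to u z
    obtain ⟨σ, hσfix, hσu⟩ : ∃ σ : (AlgebraicClosure K) →+* (AlgebraicClosure K),
        (∀ a : K, σ (ι a) = ι a) ∧ σ (u z₀) = u z := by
      have hminp : minpoly K (u z₀) = F :=
        (minpoly.eq_of_irreducible_of_monic hFirr (haevalF z₀ hz₀T) hF).symm
      obtain ⟨σe, hσe⟩ := minpoly.exists_algEquiv_of_root' (K := K)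
        (L := AlgebraicClosure K) (x := u z) (y := u z₀)
        ⟨F, hF.ne_zero, haevalF z₀ hz₀T⟩ (by rw [hminp]; exact haevalF z hz)
      exact ⟨σe.toAlgHom.toRingHom, fun a => σe.commutes a, hσe⟩
    -- transport the roots
    have hmapsto : ∀ x ∈ R z₀, σ x ∈ R z := by
      intro x hx
      rw [hmemR] at hx ⊢
      have hcomm : ∀ (P : Polynomial K) (y : (AlgebraicClosure K)),
          σ (Polynomial.eval y (P.map ι)) = Polynomial.eval (σ y) (P.map ι) := by
        intro P y
        rw [Polynomial.eval_map, Polynomial.eval_map, Polynomial.hom_eval₂]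
        congr 1
        exact RingHom.ext hσfix
      have h7 := congrArg σ hx
      rw [map_zero] at h7
      rw [hΦ] at h7 ⊢
      simp only [Polynomial.eval_sub, Polynomial.eval_mul, Polynomial.eval_C, map_sub,
        map_mul] at h7 ⊢
      rw [hGbar, hhbar, hcomm g x, hcomm h x, hσu] at h7
      rw [hGbar, hhbar]
      exact h7
    calc n ≤ (R z₀).card := hRz₀
      _ ≤ (R z).card := Finset.card_le_card_of_injOn σ hmapsto
          (Set.injOn_of_injective σ.injective)
  have hRcard : ∀ z ∈ T, (R z).card = n := fun z hz =>
    le_antisymm (hRcard_le z) (hRall z hz)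
  -- each factor splits into distinct linear factors
  have hΦprod : ∀ z ∈ T, Φ z = ∏ x ∈ R z, (X - C x) := by
    intro z hz
    have hcr : Multiset.card (Φ z).roots = n := by
      rw [Polynomial.splits_iff_card_roots.mp (IsAlgClosed.splits (Φ z))]
      exact hΦdeg z
    have hnodup : (Φ z).roots.Nodup := by
      rw [← Multiset.toFinset_card_eq_card_iff_nodup]
      rw [hcr]
      exact hRcard z hz
    have h1 := (IsAlgClosed.splits (Φ z)).eq_prod_roots_of_monic
      (hΦmonic z)
    rw [h1, Finset.prod]
    congr 1
    rw [hR]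
    simp only []
    rw [Multiset.toFinset_val, Multiset.dedup_eq_self.mpr hnodup]
  -- the factored form of the Q-transform with q-th powers pulled out
  have hFQfactored : (Qtransform g h F).map ι =
      Polynomial.expand (AlgebraicClosure K) q (∏ z ∈ T, ∏ x ∈ R z, (X - C (x ^ q))) := by
    rw [hFQbar, map_prod]
    refine Finset.prod_congr rfl fun z hz => ?_
    rw [map_prod]
    rw [hΦprod z hz, ← Finset.prod_pow]
    refine Finset.prod_congr rfl fun x hx => ?_
    rw [map_sub, Polynomial.expand_X, Polynomial.expand_C, hlinpow]
  -- identify S over the closure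
  have hSmap : S.map ι = ∏ z ∈ T, ∏ x ∈ R z, (X - C (x ^ q)) := by
    apply Polynomial.expand_injective hq0
    rw [← Polynomial.map_expand, ← hQtS, hFQfactored]
  -- separability
  have hsep : (S.map ι).Separable := by
    rw [hSmap, Finset.prod_sigma' T R (fun _ x => (X - C (x ^ q)))]
    rw [show (fun (pr : Σ _z : (AlgebraicClosure K), (AlgebraicClosure K)) => (X : Polynomial (AlgebraicClosure K)) - C (pr.snd ^ q))
      = fun pr => X - C ((fun (pr : Σ _z : (AlgebraicClosure K), (AlgebraicClosure K)) => pr.snd ^ q) pr) from rfl]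
    refine Polynomial.separable_prod_X_sub_C_iff'.mpr ?_
    rintro ⟨z₁, x₁⟩ h₁ ⟨z₂, x₂⟩ h₂ heq
    rw [Finset.mem_sigma] at h₁ h₂
    have hx : x₁ = x₂ := hqinj _ _ heq
    subst hx
    have hz12 : z₁ = z₂ := by
      have e₁ : (Φ z₁).eval x₁ = 0 := (hmemR z₁ x₁).mp h₁.2
      have e₂ : (Φ z₂).eval x₁ = 0 := (hmemR z₂ x₁).mp h₂.2
      have hh0 : hbar.eval x₁ ≠ 0 := hrootH z₁ x₁ e₁
      rw [hΦ] at e₁ e₂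
      simp only [Polynomial.eval_sub, Polynomial.eval_mul, Polynomial.eval_C] at e₁ e₂
      have : u z₁ * hbar.eval x₁ = u z₂ * hbar.eval x₁ := by
        rw [← sub_eq_zero.mp e₁, ← sub_eq_zero.mp e₂]
      exact huinj (mul_right_cancel₀ hh0 this)
    subst hz12
    rfl
  refine ⟨S, (Polynomial.separable_map ι).mp hsep, ?_⟩
  rw [hQtS, Polynomial.expand_eq_comp_X_pow]
end
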